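/- arXiv:2511.15213 — 4 statements merged into one kernel-verified Lean document; each statement's English description precedes it below -/
import Mathlib

section
/- Let B₁° denote the open unit ball of ℝⁿ and let Γ ⊆ B₁° be a compact d-set with 0 < d < n. Let (x_k)_{k∈ℕ} ⊆ Γ and (R_k)_{k∈ℕ} ⊆ (0,∞) be such that B(x_k,R_k) ⊆ B₁° for all k, B(x_k,R_k) ∩ B(x_{k'},R_{k'}) = ∅ for k ≠ k', and Γ ∩ ⋃_{k} B(x_k,R_k) is dense in Γ. Let (r_k)_{k∈ℕ} satisfy 0 < r_k < R_k for all k, and set Ω := B₁° ∖ cl(⋃_{k} B(x_k,r_k)). Then Ω = int(cl Ω). If moreover r_k ≤ R_k/3 for all k, then Ω is an open n-set: there exists c > 0 such that c·rⁿ ≤ |Ω ∩ B(x,r)| for all x ∈ Ω and 0 < r ≤ 1. -/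
/-!
Each hole `closedBall (x k) (r k)` is regular closed, hence so is the closure `F` of their union,
and `Ω = ball 0 1 \ F` is regular open as an intersection of two regular open sets.

For the density bound, note first that `Γ` is Lebesgue-null: compactness and the upper d-set
bound give `μH[d] Γ < ∞` with `d < n`. The enclosing balls `closedBall (x k) (R k)` are disjoint
in the unit ball, so only finitely many holes have radius `≥ δ`; hence a point of `F` outside
every hole is a limit of centres and lies in `Γ`. Given `y ∈ Ω` and `ρ ≤ 1`, pick a ball `Q` of
radius `ρ / 4` inside `ball 0 1 ∩ closedBall y ρ`. If some hole meeting `Q` has `R k ≥ ρ / 4`,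
the annulus `ball (x k) (R k) \ closedBall (x k) (r k) ⊆ Ω` contains a ball of radius `ρ / 24`
close to `y`. Otherwise the enclosing balls of the holes meeting `Q` lie in the concentric ball
of radius `7 / 3 · ρ / 4`, and as `r k ≤ R k / 3` the holes fill at most `3⁻ⁿ` of them, so
`F` covers at most `(7 / 9)ⁿ ≤ 7 / 9` of `Q`.
-/

open Metric MeasureTheory Set

open scoped ENNReal Function

section RegularOpen

variable {X : Type*} [TopologicalSpace X]

def IsRegularOpen (U : Set X) : Prop := interior (closure U) = U

def IsRegularClosed (F : Set X) : Prop := closure (interior F) = F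

theorem IsRegularOpen.isOpen {U : Set X} (hU : IsRegularOpen U) : IsOpen U := by
  rw [← hU]
  exact isOpen_interior

theorem IsRegularOpen.inter {U V : Set X} (hU : IsRegularOpen U) (hV : IsRegularOpen V) :
    IsRegularOpen (U ∩ V) := by
  refine Subset.antisymm ?_ ((hU.isOpen.inter hV.isOpen).subset_interior_iff.2 subset_closure)
  calc interior (closure (U ∩ V))
      ⊆ interior (closure U) ∩ interior (closure V) :=
        subset_inter (interior_mono (closure_mono inter_subset_left))
          (interior_mono (closure_mono inter_subset_right))
    _ = U ∩ V := by rw [hU, hV]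

theorem IsRegularClosed.isRegularOpen_compl {F : Set X} (hF : IsRegularClosed F) :
    IsRegularOpen Fᶜ := by
  rw [IsRegularOpen, closure_compl, interior_compl, hF]

theorem IsRegularOpen.diff {U F : Set X} (hU : IsRegularOpen U) (hF : IsRegularClosed F) :
    IsRegularOpen (U \ F) :=
  hU.inter hF.isRegularOpen_compl

theorem isRegularClosed_closure_iUnion {ι : Type*} {A : ι → Set X}
    (hA : ∀ i, IsRegularClosed (A i)) : IsRegularClosed (closure (⋃ i, A i)) := by
  refine Subset.antisymm (closure_minimal interior_subset isClosed_closure) ?_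
  refine closure_minimal (iUnion_subset fun i => ?_) isClosed_closure
  exact (hA i).symm.subset.trans
    (closure_mono (interior_mono ((subset_iUnion A i).trans subset_closure)))

end RegularOpen

theorem closure_iUnion_closedBall_subset {α ι : Type*} [PseudoMetricSpace α] {x : ι → α}
    {r : ι → ℝ} (hfin : ∀ δ > 0, {k | δ ≤ r k}.Finite) :
    closure (⋃ k, closedBall (x k) (r k)) ⊆
      (⋃ k, closedBall (x k) (r k)) ∪ closure (range x) := by
  intro z hz
  refine or_iff_not_imp_left.2 fun hzU => ?_
  rw [closure_eq_iInter_cthickening]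
  refine mem_iInter₂.2 fun δ hδ => ?_
  -- only finitely many of the balls are not contained in the `δ`-neighbourhood of the centres
  have hsplit : (⋃ k, closedBall (x k) (r k)) ⊆
      (⋃ k ∈ {k | δ ≤ r k}, closedBall (x k) (r k)) ∪ cthickening δ (range x) := by
    refine iUnion_subset fun k => ?_
    by_cases hk : δ ≤ r k
    · exact subset_union_of_subset_left
        (subset_biUnion_of_mem (u := fun k => closedBall (x k) (r k)) hk) _
    · exact subset_union_of_subset_right ((closedBall_subset_closedBall (not_le.1 hk).le).trans
        (closedBall_subset_cthickening (mem_range_self k) δ)) _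
  have hclosed : IsClosed
      ((⋃ k ∈ {k | δ ≤ r k}, closedBall (x k) (r k)) ∪ cthickening δ (range x)) :=
    ((hfin δ hδ).isClosed_biUnion fun k _ => isClosed_closedBall).union isClosed_cthickening
  refine (closure_minimal hsplit hclosed hz).resolve_left fun hz' => hzU ?_
  obtain ⟨k, -, hk⟩ := mem_iUnion₂.1 hz'
  exact mem_iUnion.2 ⟨k, hk⟩

theorem IsCompact.measure_lt_top_of_inter_closedBall {α : Type*} [PseudoMetricSpace α]
    [MeasurableSpace α] {μ : Measure α} {s : Set α} (hs : IsCompact s) {ε : ℝ} (hε : 0 < ε)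
    (h : ∀ y ∈ s, μ (s ∩ closedBall y ε) < ∞) : μ s < ∞ :=
  hs.measure_lt_top_of_nhdsWithin fun y hy =>
    ⟨_, inter_mem_nhdsWithin s (closedBall_mem_nhds y hε), h y hy⟩

section NormedSpace

variable {E : Type*} [NormedAddCommGroup E] [NormedSpace ℝ E]

theorem isRegularOpen_ball (x : E) {r : ℝ} (hr : r ≠ 0) : IsRegularOpen (ball x r) := by
  rw [IsRegularOpen, closure_ball x hr, interior_closedBall x hr]

theorem isRegularClosed_closedBall (x : E) {r : ℝ} (hr : r ≠ 0) :
    IsRegularClosed (closedBall x r) := by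
  rw [IsRegularClosed, interior_closedBall x hr, closure_ball x hr]

theorem exists_closedBall_subset_ball_zero_one {y : E} (hy : ‖y‖ ≤ 1) {ρ : ℝ} (hρ0 : 0 < ρ)
    (hρ2 : ρ ≤ 2) : ∃ z, dist z y ≤ ρ / 2 ∧ closedBall z (ρ / 4) ⊆ ball 0 1 := by
  have hnorm : ‖(1 - ρ / 2) • y‖ ≤ 1 - ρ / 2 := by
    rw [norm_smul, Real.norm_of_nonneg (by linarith)]
    exact mul_le_of_le_one_right (by linarith) hy
  refine ⟨(1 - ρ / 2) • y, ?_, fun w hw => ?_⟩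
  · rw [dist_eq_norm, show (1 - ρ / 2) • y - y = (-(ρ / 2)) • y by module, norm_smul,
      norm_neg, Real.norm_of_nonneg (by positivity)]
    exact mul_le_of_le_one_right (by positivity) hy
  · rw [mem_ball_zero_iff]
    linarith [norm_le_of_mem_closedBall hw]

theorem exists_closedBall_subset_annulus (c y : E) {a b v : ℝ} (ha : 0 ≤ a) (hv : 0 < v)
    (hab : a + 4 * v ≤ b) (hy : a < dist y c) :
    ∃ q, closedBall q v ⊆ ball c b \ closedBall c a ∧ dist q y ≤ max (dist y c - b) 0 + 2 * v := by
  set D := dist y c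
  have hD : 0 < D := ha.trans_lt hy
  -- `q` is the point of the ray from `c` through `y` at distance `m` from `c`, the distance of
  -- `y` clamped to `[a + 2v, b - 2v]`
  set m := max (a + 2 * v) (min D (b - 2 * v))
  have hm : a + 2 * v ≤ m ∧ m ≤ b - 2 * v :=
    ⟨le_max_left _ _, max_le (by linarith) (min_le_right _ _)⟩
  have hqc : dist (AffineMap.lineMap c y (m / D)) c = m := by
    rw [dist_lineMap_left, Real.norm_of_nonneg (by positivity), dist_comm, div_mul_cancel₀ _ hD.ne']
  refine ⟨AffineMap.lineMap c y (m / D), fun w hw => ⟨?_, ?_⟩, ?_⟩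
  · rw [mem_ball]
    linarith [dist_triangle w (AffineMap.lineMap c y (m / D)) c, mem_closedBall.1 hw]
  · rw [mem_closedBall, not_le]
    linarith [dist_triangle_left (AffineMap.lineMap c y (m / D)) c w, mem_closedBall.1 hw]
  · have hqy : dist (AffineMap.lineMap c y (m / D)) y = |D - m| := by
      rw [dist_lineMap_right, dist_comm c y, Real.norm_eq_abs,
        ← show (1 - m / D) * D = D - m by field_simp, abs_mul, abs_of_pos hD]
    rw [hqy, abs_le]
    constructor <;> simp only [m, max_def, min_def] <;> split_ifs <;> linarith

end NormedSpace

section PerforatedBall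

variable {E : Type*} [NormedAddCommGroup E] {ι : Type*}

def perforatedBall (x : ι → E) (r : ι → ℝ) : Set E :=
  ball 0 1 \ closure (⋃ k, closedBall (x k) (r k))

theorem isOpen_perforatedBall (x : ι → E) (r : ι → ℝ) : IsOpen (perforatedBall x r) :=
  isOpen_ball.sdiff isClosed_closure

theorem lt_dist_of_mem_perforatedBall {x : ι → E} {r : ι → ℝ} {y : E}
    (hy : y ∈ perforatedBall x r) (k : ι) : r k < dist y (x k) := by
  by_contra! h
  exact hy.2 (subset_closure (mem_iUnion.2 ⟨k, mem_closedBall.2 h⟩))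

theorem annulus_subset_perforatedBall {x : ι → E} {r R : ι → ℝ}
    (hsub : ∀ k, closedBall (x k) (R k) ⊆ ball 0 1)
    (hdisj : Pairwise (Disjoint on fun k => closedBall (x k) (R k))) (hrR : ∀ k, r k ≤ R k)
    (k : ι) : ball (x k) (R k) \ closedBall (x k) (r k) ⊆ perforatedBall x r := by
  refine subset_sdiff.2 ⟨sdiff_subset.trans (ball_subset_closedBall.trans (hsub k)), ?_⟩
  refine Disjoint.closure_right (disjoint_iUnion_right.2 fun j => ?_)
    (isOpen_ball.sdiff isClosed_closedBall)
  rcases eq_or_ne j k with rfl | hjk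
  · exact disjoint_sdiff_left
  · exact ((hdisj hjk).mono (closedBall_subset_closedBall (hrR j))
      ball_subset_closedBall).symm.mono_left sdiff_subset

variable [NormedSpace ℝ E]

theorem isRegularOpen_perforatedBall (x : ι → E) {r : ι → ℝ} (hr : ∀ k, r k ≠ 0) :
    IsRegularOpen (perforatedBall x r) :=
  (isRegularOpen_ball 0 one_ne_zero).diff
    (isRegularClosed_closure_iUnion fun k => isRegularClosed_closedBall (x k) (hr k))

theorem perforatedBall_nonempty [Nontrivial E] [Nonempty ι] {x : ι → E} {r R : ι → ℝ}
    (hr : ∀ k, 0 ≤ r k) (hrR : ∀ k, r k < R k) (hsub : ∀ k, closedBall (x k) (R k) ⊆ ball 0 1)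
    (hdisj : Pairwise (Disjoint on fun k => closedBall (x k) (R k))) :
    (perforatedBall x r).Nonempty := by
  obtain k : ι := Classical.arbitrary ι
  obtain ⟨w, hw⟩ := NormedSpace.sphere_nonempty (x := x k).2
    (by linarith [hr k, hrR k] : 0 ≤ (r k + R k) / 2)
  refine ⟨w, annulus_subset_perforatedBall hsub hdisj (fun k => (hrR k).le) k ⟨?_, ?_⟩⟩
  · rw [mem_ball, mem_sphere.1 hw]
    linarith [hrR k]
  · rw [mem_closedBall, mem_sphere.1 hw, not_le]
    linarith [hrR k]

theorem exists_closedBall_subset_perforatedBall_inter_closedBall {x : ι → E} {r R : ι → ℝ}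
    (hr : ∀ k, 0 ≤ r k) (hrR : ∀ k, r k ≤ R k / 3) (hsub : ∀ k, closedBall (x k) (R k) ⊆ ball 0 1)
    (hdisj : Pairwise (Disjoint on fun k => closedBall (x k) (R k))) {y : E}
    (hy : y ∈ perforatedBall x r) {ρ : ℝ} (hρ : 0 < ρ) {k : ι} (hk : ρ / 4 ≤ R k)
    (hyk : dist y (x k) ≤ R k + 3 * ρ / 4) :
    ∃ q, closedBall q (ρ / 24) ⊆ perforatedBall x r ∩ closedBall y ρ := by
  obtain ⟨q, hq, hqy⟩ := exists_closedBall_subset_annulus (x k) y (b := R k) (v := ρ / 24)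
    (hr k) (by positivity) (by linarith [hrR k]) (lt_dist_of_mem_perforatedBall hy k)
  refine ⟨q, subset_inter (hq.trans (annulus_subset_perforatedBall hsub hdisj
    (fun k => by linarith [hr k, hrR k]) k)) (closedBall_subset_closedBall' ?_)⟩
  have := max_le (by linarith : dist y (x k) - R k ≤ 3 * ρ / 4) (by positivity : 0 ≤ 3 * ρ / 4)
  linarith

end PerforatedBall

section AddHaar

variable {E : Type*} [NormedAddCommGroup E] [MeasurableSpace E] [BorelSpace E] (μ : Measure E)
  [μ.IsAddHaarMeasure] {ι : Type*}

theorem finite_setOf_le_radius_of_pairwiseDisjoint {x : ι → E} {R : ι → ℝ}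
    (hdisj : Pairwise (Disjoint on fun k => closedBall (x k) (R k)))
    (hfin : μ (⋃ k, closedBall (x k) (R k)) ≠ ∞) {δ : ℝ} (hδ : 0 < δ) :
    {k | δ ≤ R k}.Finite := by
  refine (Measure.finite_const_le_meas_of_disjoint_iUnion μ (measure_closedBall_pos μ 0 hδ)
    (fun k => measurableSet_closedBall) hdisj hfin).subset fun k hk => ?_
  change μ (closedBall 0 δ) ≤ μ (closedBall (x k) (R k))
  rw [← Measure.addHaar_closedBall_center μ (x k)]
  exact measure_mono (closedBall_subset_closedBall hk)

variable [NormedSpace ℝ E] [FiniteDimensional ℝ E]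

theorem measure_eq_zero_of_hausdorffMeasure_ne_top {d : ℝ} (hd : d < Module.finrank ℝ E)
    {s : Set E} (hs : μH[d] s ≠ ∞) : μ s = 0 :=
  Measure.absolutelyContinuous_isAddHaarMeasure μ μH[Module.finrank ℝ E]
    ((Measure.hausdorffMeasure_zero_or_top hd s).resolve_right hs)

variable [Countable ι]

theorem measure_biUnion_closedBall_le_of_pairwiseDisjoint {S : Set ι}
    {x : ι → E} {r R : ι → ℝ} {θ : ℝ} (hθ : 0 ≤ θ) (hR : ∀ k ∈ S, 0 ≤ R k)
    (hrR : ∀ k ∈ S, r k ≤ θ * R k) (hdisj : S.PairwiseDisjoint fun k => closedBall (x k) (R k))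
    {A : Set E} (hA : ∀ k ∈ S, closedBall (x k) (R k) ⊆ A) :
    μ (⋃ k ∈ S, closedBall (x k) (r k)) ≤ ENNReal.ofReal (θ ^ Module.finrank ℝ E) * μ A := by
  calc μ (⋃ k ∈ S, closedBall (x k) (r k))
      ≤ ∑' k : S, μ (closedBall (x k) (r k)) := measure_biUnion_le μ S.to_countable _
    _ ≤ ∑' k : S, ENNReal.ofReal (θ ^ Module.finrank ℝ E) * μ (closedBall (x k) (R k)) := by
        refine ENNReal.tsum_le_tsum fun k => ?_
        rw [Measure.addHaar_closedBall_center μ (x k) (R k),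
          ← Measure.addHaar_closedBall_mul μ (x k) hθ (hR k k.2)]
        exact measure_mono (closedBall_subset_closedBall (hrR k k.2))
    _ = ENNReal.ofReal (θ ^ Module.finrank ℝ E) * μ (⋃ k ∈ S, closedBall (x k) (R k)) := by
        rw [ENNReal.tsum_mul_left,
          measure_biUnion S.to_countable hdisj fun k _ => measurableSet_closedBall]
    _ ≤ ENNReal.ofReal (θ ^ Module.finrank ℝ E) * μ A := by
        gcongr
        exact iUnion₂_subset hA

theorem measure_closedBall_inter_iUnion_closedBall_le {x : ι → E} {r R : ι → ℝ}
    (hR : ∀ k, 0 ≤ R k) (hrR : ∀ k, r k ≤ R k / 3)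
    (hdisj : Pairwise (Disjoint on fun k => closedBall (x k) (R k))) (z : E) {s : ℝ}
    (hs : 0 ≤ s) (hsmall : ∀ k, dist (x k) z ≤ r k + s → R k < s) :
    μ (closedBall z s ∩ ⋃ k, closedBall (x k) (r k)) ≤
      ENNReal.ofReal ((7 / 9) ^ Module.finrank ℝ E) * μ (closedBall z s) := by
  set S := {k | dist (x k) z ≤ r k + s}
  have hcover : closedBall z s ∩ ⋃ k, closedBall (x k) (r k) ⊆
      ⋃ k ∈ S, closedBall (x k) (r k) := by
    rintro w ⟨hwz, hw⟩
    obtain ⟨k, hwk⟩ := mem_iUnion.1 hw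
    exact mem_biUnion (show k ∈ S from (dist_triangle_left _ _ w).trans
      (add_le_add (mem_closedBall.1 hwk) (mem_closedBall.1 hwz))) hwk
  have hbig : ∀ k ∈ S, closedBall (x k) (R k) ⊆ closedBall z (7 / 3 * s) := fun k hk =>
    closedBall_subset_closedBall'
      (by linarith [hsmall k hk, hrR k, show dist (x k) z ≤ r k + s from hk])
  calc μ (closedBall z s ∩ ⋃ k, closedBall (x k) (r k))
      ≤ ENNReal.ofReal ((1 / 3) ^ Module.finrank ℝ E) * μ (closedBall z (7 / 3 * s)) :=
        (measure_mono hcover).trans (measure_biUnion_closedBall_le_of_pairwiseDisjoint μ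
          (by norm_num) (fun k _ => hR k) (fun k _ => by linarith [hrR k])
          (hdisj.set_pairwise S) hbig)
    _ = ENNReal.ofReal ((7 / 9) ^ Module.finrank ℝ E) * μ (closedBall z s) := by
        rw [Measure.addHaar_closedBall_mul μ z (by norm_num) hs,
          Measure.addHaar_closedBall_center μ z s, ← mul_assoc,
          ← ENNReal.ofReal_mul (by positivity), ← mul_pow]
        norm_num

variable [Nontrivial E]

theorem measure_closedBall_diff_closure_iUnion_closedBall_ge {x : ι → E} {r R : ι → ℝ}
    (hnull : μ (closure (range x)) = 0) (hR : ∀ k, 0 ≤ R k) (hrR : ∀ k, r k ≤ R k / 3)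
    (hdisj : Pairwise (Disjoint on fun k => closedBall (x k) (R k)))
    (hfin : ∀ δ > 0, {k | δ ≤ r k}.Finite) (z : E) {s : ℝ} (hs : 0 ≤ s)
    (hsmall : ∀ k, dist (x k) z ≤ r k + s → R k < s) :
    ENNReal.ofReal (2 / 9) * μ (closedBall z s) ≤
      μ (closedBall z s \ closure (⋃ k, closedBall (x k) (r k))) := by
  set Q := closedBall z s
  set F := closure (⋃ k, closedBall (x k) (r k))
  have hF : μ (Q ∩ F) ≤ ENNReal.ofReal (7 / 9) * μ Q := by
    calc μ (Q ∩ F) ≤ μ ((Q ∩ ⋃ k, closedBall (x k) (r k)) ∪ closure (range x)) :=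
          measure_mono fun w hw =>
            (closure_iUnion_closedBall_subset hfin hw.2).imp (fun h => ⟨hw.1, h⟩) id
      _ ≤ μ (Q ∩ ⋃ k, closedBall (x k) (r k)) :=
          (measure_union_le _ _).trans (by rw [hnull, add_zero])
      _ ≤ ENNReal.ofReal ((7 / 9) ^ Module.finrank ℝ E) * μ Q :=
          measure_closedBall_inter_iUnion_closedBall_le μ hR hrR hdisj z hs hsmall
      _ ≤ ENNReal.ofReal (7 / 9) * μ Q := by
          gcongr
          exact pow_le_of_le_one (by norm_num) (by norm_num) Module.finrank_pos.ne'
  refine ENNReal.le_of_add_le_add_right (a := ENNReal.ofReal (7 / 9) * μ Q)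
    (ENNReal.mul_ne_top ENNReal.ofReal_ne_top measure_closedBall_lt_top.ne) ?_
  calc ENNReal.ofReal (2 / 9) * μ Q + ENNReal.ofReal (7 / 9) * μ Q = μ Q := by
        rw [← add_mul, ← ENNReal.ofReal_add (by norm_num) (by norm_num)]
        norm_num
    _ = μ (Q \ F) + μ (Q ∩ F) := (measure_sdiff_add_inter Q isClosed_closure.measurableSet).symm
    _ ≤ μ (Q \ F) + ENNReal.ofReal (7 / 9) * μ Q := by gcongr

theorem measure_perforatedBall_inter_closedBall_ge {x : ι → E} {r R : ι → ℝ}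
    (hnull : μ (closure (range x)) = 0) (hr : ∀ k, 0 < r k) (hrR : ∀ k, r k ≤ R k / 3)
    (hsub : ∀ k, closedBall (x k) (R k) ⊆ ball 0 1)
    (hdisj : Pairwise (Disjoint on fun k => closedBall (x k) (R k))) {y : E}
    (hy : y ∈ perforatedBall x r) {ρ : ℝ} (hρ0 : 0 < ρ) (hρ2 : ρ ≤ 2) :
    ENNReal.ofReal (2 / 9) * μ (closedBall 0 (ρ / 24)) ≤
      μ (perforatedBall x r ∩ closedBall y ρ) := by
  have hR : ∀ k, 0 ≤ R k := fun k => by linarith [hr k, hrR k]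
  obtain ⟨z, hzy, hz⟩ :=
    exists_closedBall_subset_ball_zero_one (mem_ball_zero_iff.1 hy.1).le hρ0 hρ2
  by_cases hlarge : ∃ k, ρ / 4 ≤ R k ∧ dist (x k) z ≤ r k + ρ / 4
  · obtain ⟨k, hk, hxz⟩ := hlarge
    obtain ⟨q, hq⟩ := exists_closedBall_subset_perforatedBall_inter_closedBall
      (fun k => (hr k).le) hrR hsub hdisj hy hρ0 hk
      (by linarith [dist_triangle y z (x k), dist_comm z y, dist_comm z (x k), hrR k])
    calc ENNReal.ofReal (2 / 9) * μ (closedBall 0 (ρ / 24)) ≤ μ (closedBall q (ρ / 24)) := by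
          rw [Measure.addHaar_closedBall_center μ q]
          exact mul_le_of_le_one_left' (ENNReal.ofReal_le_one.2 (by norm_num))
      _ ≤ μ (perforatedBall x r ∩ closedBall y ρ) := measure_mono hq
  · simp only [not_exists, not_and, not_le] at hlarge
    have hfin : ∀ δ > 0, {k | δ ≤ r k}.Finite := fun δ hδ =>
      (finite_setOf_le_radius_of_pairwiseDisjoint μ hdisj
        ((measure_mono (iUnion_subset hsub)).trans_lt measure_ball_lt_top).ne hδ).subset
        fun k (hk : δ ≤ r k) => hk.trans (by linarith [hr k, hrR k])
    calc ENNReal.ofReal (2 / 9) * μ (closedBall 0 (ρ / 24))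
        ≤ ENNReal.ofReal (2 / 9) * μ (closedBall z (ρ / 4)) := by
          rw [Measure.addHaar_closedBall_center μ z]
          gcongr
          norm_num
      _ ≤ μ (closedBall z (ρ / 4) \ closure (⋃ k, closedBall (x k) (r k))) :=
          measure_closedBall_diff_closure_iUnion_closedBall_ge μ hnull hR hrR hdisj hfin z
            (by positivity) fun k h => not_le.1 fun hk => (hlarge k hk).not_ge h
      _ ≤ μ (perforatedBall x r ∩ closedBall y ρ) :=
          measure_mono (subset_inter (sdiff_subset_sdiff_left hz)
            (sdiff_subset.trans (closedBall_subset_closedBall' (by linarith))))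

end AddHaar

theorem statement14_general
    (n : ℕ) (hn : 1 ≤ n)
    (d : ℝ) (hdn : d < n)
    (Γ : Set (EuclideanSpace ℝ (Fin n)))
    (hΓcomp : IsCompact Γ)
    (hdset : ∃ c₁ c₂ : ℝ, 0 < c₁ ∧ c₁ ≤ c₂ ∧
      ∀ x ∈ Γ, ∀ r : ℝ, 0 < r → r ≤ 1 →
        ENNReal.ofReal (c₁ * r ^ d) ≤ μH[d] (Γ ∩ Metric.closedBall x r) ∧
        μH[d] (Γ ∩ Metric.closedBall x r) ≤ ENNReal.ofReal (c₂ * r ^ d))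
    (x : ℕ → EuclideanSpace ℝ (Fin n)) (hx : ∀ k, x k ∈ Γ)
    (R : ℕ → ℝ)
    (hsub : ∀ k, Metric.closedBall (x k) (R k) ⊆
      Metric.ball (0 : EuclideanSpace ℝ (Fin n)) 1)
    (hdisj : ∀ k k' : ℕ, k ≠ k' →
      Metric.closedBall (x k) (R k) ∩ Metric.closedBall (x k') (R k') = ∅)
    (r : ℕ → ℝ) (hr : ∀ k, 0 < r k)
    (Ω : Set (EuclideanSpace ℝ (Fin n)))
    (hΩ : Ω = Metric.ball (0 : EuclideanSpace ℝ (Fin n)) 1 \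
      closure (⋃ k, Metric.closedBall (x k) (r k))) :
    Ω = interior (closure Ω) ∧
    ((∀ k, r k ≤ R k / 3) →
      Ω.Nonempty ∧ IsOpen Ω ∧
      ∃ c : ℝ, 0 < c ∧ ∀ y ∈ Ω, ∀ ρ : ℝ, 0 < ρ → ρ ≤ 1 →
        ENNReal.ofReal (c * ρ ^ n) ≤ volume (Ω ∩ Metric.closedBall y ρ)) := by
  obtain rfl : Ω = perforatedBall x r := hΩ
  refine ⟨(isRegularOpen_perforatedBall x fun k => (hr k).ne').symm, fun hrR => ?_⟩
  have : Nontrivial (EuclideanSpace ℝ (Fin n)) :=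
    Module.nontrivial_of_finrank_pos (R := ℝ) (by rwa [finrank_euclideanSpace_fin])
  have hdisj' : Pairwise (Disjoint on fun k => closedBall (x k) (R k)) :=
    fun k k' hkk' => disjoint_iff_inter_eq_empty.2 (hdisj k k' hkk')
  have hΓnull : volume Γ = 0 := by
    obtain ⟨_, c₂, -, -, hball⟩ := hdset
    exact measure_eq_zero_of_hausdorffMeasure_ne_top volume (by simpa using hdn)
      (hΓcomp.measure_lt_top_of_inter_closedBall one_pos fun y hy =>
        (hball y hy 1 one_pos le_rfl).2.trans_lt ENNReal.ofReal_lt_top).ne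
  have hnull : volume (closure (range x)) = 0 :=
    measure_mono_null (closure_minimal (range_subset_iff.2 hx) hΓcomp.isClosed) hΓnull
  set V := volume (closedBall (0 : EuclideanSpace ℝ (Fin n)) (1 / 24))
  refine ⟨perforatedBall_nonempty (fun k => (hr k).le) (fun k => by linarith [hr k, hrR k])
      hsub hdisj', isOpen_perforatedBall x r, 2 / 9 * V.toReal,
    mul_pos (by norm_num) (ENNReal.toReal_pos (measure_closedBall_pos _ _ (by norm_num)).ne'
      measure_closedBall_lt_top.ne), fun y hy ρ hρ0 hρ1 => ?_⟩
  calc ENNReal.ofReal (2 / 9 * V.toReal * ρ ^ n)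
      = ENNReal.ofReal (2 / 9) * volume (closedBall (0 : EuclideanSpace ℝ (Fin n)) (ρ / 24)) := by
        rw [show ρ / 24 = ρ * (1 / 24) by ring,
          Measure.addHaar_closedBall_mul volume 0 hρ0.le (by norm_num), finrank_euclideanSpace_fin,
          ENNReal.ofReal_mul (by positivity), ENNReal.ofReal_mul (by norm_num),
          ENNReal.ofReal_toReal measure_closedBall_lt_top.ne]
        ring
    _ ≤ volume (perforatedBall x r ∩ closedBall y ρ) :=
        measure_perforatedBall_inter_closedBall_ge volume hnull hr hrR hsub hdisj' hy hρ0
          (by linarith)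

/-- Let Γ ⊆ B₁° be a compact d-set (0 < d < n), (x_k) ⊆ Γ,
(R_k) ⊆ (0,∞) with B(x_k,R_k) ⊆ B₁°, pairwise disjoint, and Γ ∩ ⋃_k B(x_k,R_k)
dense in Γ. Let 0 < r_k < R_k and Ω := B₁° ∖ cl(⋃_k B(x_k,r_k)). Then
Ω = int(cl Ω); and if moreover r_k ≤ R_k/3 for all k, then Ω is an open n-set. -/
theorem statement14
    (n : ℕ) (hn : 1 ≤ n)
    (d : ℝ) (hd0 : 0 < d) (hdn : d < n)
    (Γ : Set (EuclideanSpace ℝ (Fin n)))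
    (hΓcomp : IsCompact Γ)
    (hΓsub : Γ ⊆ Metric.ball (0 : EuclideanSpace ℝ (Fin n)) 1)
    (hdset : ∃ c₁ c₂ : ℝ, 0 < c₁ ∧ c₁ ≤ c₂ ∧
      ∀ x ∈ Γ, ∀ r : ℝ, 0 < r → r ≤ 1 →
        ENNReal.ofReal (c₁ * r ^ d) ≤ μH[d] (Γ ∩ Metric.closedBall x r) ∧
        μH[d] (Γ ∩ Metric.closedBall x r) ≤ ENNReal.ofReal (c₂ * r ^ d))
    (x : ℕ → EuclideanSpace ℝ (Fin n)) (hx : ∀ k, x k ∈ Γ)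
    (R : ℕ → ℝ) (hR : ∀ k, 0 < R k)
    (hsub : ∀ k, Metric.closedBall (x k) (R k) ⊆
      Metric.ball (0 : EuclideanSpace ℝ (Fin n)) 1)
    (hdisj : ∀ k k' : ℕ, k ≠ k' →
      Metric.closedBall (x k) (R k) ∩ Metric.closedBall (x k') (R k') = ∅)
    (hdense : Γ ⊆ closure (Γ ∩ ⋃ k, Metric.closedBall (x k) (R k)))
    (r : ℕ → ℝ) (hr : ∀ k, 0 < r k) (hrR : ∀ k, r k < R k)
    (Ω : Set (EuclideanSpace ℝ (Fin n)))
    (hΩ : Ω = Metric.ball (0 : EuclideanSpace ℝ (Fin n)) 1 \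
      closure (⋃ k, Metric.closedBall (x k) (r k))) :
    Ω = interior (closure Ω) ∧
    ((∀ k, r k ≤ R k / 3) →
      Ω.Nonempty ∧ IsOpen Ω ∧
      ∃ c : ℝ, 0 < c ∧ ∀ y ∈ Ω, ∀ ρ : ℝ, 0 < ρ → ρ ≤ 1 →
        ENNReal.ofReal (c * ρ ^ n) ≤ volume (Ω ∩ Metric.closedBall y ρ)) :=
  statement14_general n hn d hdn Γ hΓcomp hdset x hx R hsub hdisj r hr Ω hΩ
end

section
/- Let A ⊆ ℝⁿ be a non-empty, bounded, Lebesgue-measurable set whose boundary ∂A is contained in a compact d-set for some 0 ≤ d < n. Then for every t with 0 ≤ t < n − d, the integral ∫_A dist(y,∂A)^{−t} dy is finite. -/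
/-!
Lower `d`-regularity of `B` bounds the number of disjoint balls of radius `r / 2` centred in `B`
by `≲ r ^ (-d)`, so a maximal `r`-separated subset of `B` is an `r`-net of that size and the
`r`-neighbourhood of `B` has volume `≲ r ^ (n - d)`; in particular `B` is null. Off `B`,
`dist(y, ∂A) ^ (-t) ≤ dist(y, B) ^ (-t)`, which on the dyadic shell
`2 ^ (-j - 1) < dist(y, B) ≤ 2 ^ (-j)` is `≲ 2 ^ (j t)`, so the integral is dominated by
`vol A + ∑ⱼ 2 ^ (j (t - (n - d)))`.
-/

open Metric MeasureTheory Set Filter Topology Module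
open scoped ENNReal NNReal

namespace Metric

lemma IsCover.cthickening_subset_biUnion_closedBall {X : Type*} [PseudoMetricSpace X]
    {ε : ℝ≥0} {B N : Set X} (hN : IsCover ε B N) (hB : IsCompact B) :
    cthickening ε B ⊆ ⋃ x ∈ N, closedBall x (2 * ε) := by
  intro y hy
  rcases B.eq_empty_or_nonempty with rfl | hBne
  · simp at hy
  obtain ⟨b, hb, hyb⟩ := hB.exists_infEDist_eq_edist hBne y
  obtain ⟨x, hx, hbx⟩ := mem_iUnion₂.1 (isCover_iff_subset_iUnion_closedBall.1 hN hb)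
  rw [mem_cthickening_iff, hyb, edist_dist, ENNReal.ofReal_le_ofReal_iff ε.coe_nonneg] at hy
  refine mem_iUnion₂.2 ⟨x, hx, ?_⟩
  rw [mem_closedBall] at hbx ⊢
  linarith [dist_triangle y b x]

variable {X : Type*} [PseudoMetricSpace X] [MeasurableSpace X] [OpensMeasurableSpace X]
  {μ : Measure X} {B C : Set X} {ε : ℝ≥0} {m : ℝ≥0∞}

lemma IsSeparated.finsetCard_mul_le_measure {s : Finset X} (hs : IsSeparated ε (s : Set X))
    (hsB : ↑s ⊆ B) (hB : MeasurableSet B) (hm : ∀ x ∈ B, m ≤ μ (B ∩ closedBall x (ε / 2))) :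
    s.card * m ≤ μ B := by
  have hdisj : (s : Set X).PairwiseDisjoint fun x ↦ B ∩ closedBall x (ε / 2) := by
    intro x hx y hy hxy
    refine (closedBall_disjoint_closedBall ?_).mono inter_subset_right inter_subset_right
    rw [add_halves]
    have : (ε : ℝ≥0∞) < edist x y := hs hx hy hxy
    rwa [edist_dist, ← ENNReal.ofReal_coe_nnreal,
      ENNReal.ofReal_lt_ofReal_iff_of_nonneg ε.coe_nonneg] at this
  calc s.card * m = ∑ _x ∈ s, m := by rw [Finset.sum_const, nsmul_eq_mul]
    _ ≤ ∑ x ∈ s, μ (B ∩ closedBall x (ε / 2)) := Finset.sum_le_sum fun x hx ↦ hm x (hsB hx)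
    _ = μ (⋃ x ∈ s, B ∩ closedBall x (ε / 2)) :=
      (measure_biUnion_finset hdisj fun _ _ ↦ hB.inter measurableSet_closedBall).symm
    _ ≤ μ B := measure_mono (iUnion₂_subset fun _ _ ↦ inter_subset_left)

lemma IsSeparated.encard_mul_le_measure (hC : IsSeparated ε C) (hCB : C ⊆ B)
    (hB : MeasurableSet B) (hm : ∀ x ∈ B, m ≤ μ (B ∩ closedBall x (ε / 2))) :
    C.encard * m ≤ μ B := by
  rcases C.finite_or_infinite with hfin | hinf
  · lift C to Finset X using hfin
    simpa using hC.finsetCard_mul_le_measure hCB hB hm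
  rcases eq_or_ne m 0 with rfl | hm0
  · simp
  rw [hinf.encard_eq, ENat.toENNReal_top, ENNReal.top_mul hm0, top_le_iff]
  by_contra hμB
  obtain ⟨k, hk⟩ := ENNReal.exists_nat_mul_gt hm0 hμB
  obtain ⟨s, hsC, rfl⟩ := hinf.exists_subset_card_eq k
  exact hk.not_ge ((hC.subset hsC).finsetCard_mul_le_measure (hsC.trans hCB) hB hm)

lemma packingNumber_mul_le_measure (hB : MeasurableSet B)
    (hm : ∀ x ∈ B, m ≤ μ (B ∩ closedBall x (ε / 2))) :
    packingNumber ε B * m ≤ μ B := by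
  simp only [packingNumber, ENat.toENNReal_iSup, ENNReal.iSup_mul]
  exact iSup₂_le fun C hCB ↦ iSup_le fun hC ↦ hC.encard_mul_le_measure hCB hB hm

lemma exists_finite_isCover_encard_mul_le_measure (hB : MeasurableSet B) (hμB : μ B ≠ ⊤)
    (hm0 : m ≠ 0) (hm : ∀ x ∈ B, m ≤ μ (B ∩ closedBall x (ε / 2))) :
    ∃ N : Set X, N.Finite ∧ IsCover ε B N ∧ N.encard * m ≤ μ B := by
  have hpack : packingNumber ε B ≠ ⊤ := by
    intro htop
    have := packingNumber_mul_le_measure hB hm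
    rw [htop, ENat.toENNReal_top, ENNReal.top_mul hm0, top_le_iff] at this
    exact hμB this
  refine ⟨maximalSeparatedSet ε B, ?_, isCover_maximalSeparatedSet hpack,
    isSeparated_maximalSeparatedSet.encard_mul_le_measure maximalSeparatedSet_subset hB hm⟩
  rw [← Set.encard_ne_top_iff, encard_maximalSeparatedSet hpack]
  exact hpack

end Metric

section AddHaar

variable {E : Type*} [NormedAddCommGroup E] [NormedSpace ℝ E] [FiniteDimensional ℝ E]
  [MeasurableSpace E] [BorelSpace E] (μ : Measure E) [μ.IsAddHaarMeasure]

lemma measure_biUnion_closedBall_le {N : Set E} (hN : N.Countable) {r : ℝ} (hr : 0 ≤ r) :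
    μ (⋃ x ∈ N, closedBall x r) ≤
      N.encard * (ENNReal.ofReal (r ^ finrank ℝ E) * μ (ball 0 1)) := by
  calc μ (⋃ x ∈ N, closedBall x r) ≤ ∑' x : N, μ (closedBall (x : E) r) :=
        measure_biUnion_le μ hN _
    _ = N.encard * (ENNReal.ofReal (r ^ finrank ℝ E) * μ (ball 0 1)) := by
      simp only [Measure.addHaar_closedBall μ _ hr, ENNReal.tsum_const, Set.encard]

theorem exists_measure_cthickening_le_mul_rpow {ν : Measure E} {B : Set E} {c d : ℝ}
    (hB : IsCompact B) (hνB : ν B ≠ ⊤) (hc : 0 < c)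
    (hlow : ∀ x ∈ B, ∀ r : ℝ, 0 < r → r ≤ 1 →
      ENNReal.ofReal (c * r ^ d) ≤ ν (B ∩ closedBall x r)) :
    ∃ K : ℝ≥0∞, K ≠ ⊤ ∧ ∀ r : ℝ, 0 < r → r ≤ 1 →
      μ (cthickening r B) ≤ K * ENNReal.ofReal r ^ ((finrank ℝ E : ℝ) - d) := by
  set k := finrank ℝ E
  refine ⟨ν B * ENNReal.ofReal (c⁻¹ * 2 ^ (d + k)) * μ (ball 0 1),
    ENNReal.mul_ne_top (ENNReal.mul_ne_top hνB ENNReal.ofReal_ne_top)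
      measure_ball_lt_top.ne, fun r hr0 hr1 ↦ ?_⟩
  set m := ENNReal.ofReal (c * (r / 2) ^ d)
  have hm : ∀ x ∈ B, m ≤ ν (B ∩ closedBall x ((⟨r, hr0.le⟩ : ℝ≥0) / 2)) :=
    fun x hx ↦ hlow x hx (r / 2) (by positivity) (by linarith)
  obtain ⟨N, hNfin, hNcov, hNcard⟩ := exists_finite_isCover_encard_mul_le_measure
    hB.isClosed.measurableSet hνB (ENNReal.ofReal_pos.2 (by positivity)).ne' hm
  have hscale : ENNReal.ofReal ((2 * r) ^ k) =
      m * (ENNReal.ofReal (c⁻¹ * 2 ^ (d + k)) * ENNReal.ofReal r ^ ((k : ℝ) - d)) := by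
    rw [ENNReal.ofReal_rpow_of_pos hr0, ← ENNReal.ofReal_mul (by positivity),
      ← ENNReal.ofReal_mul (by positivity)]
    congr 1
    rw [Real.div_rpow hr0.le zero_le_two, Real.rpow_add two_pos, Real.rpow_sub hr0,
      Real.rpow_natCast, Real.rpow_natCast, mul_pow]
    field_simp
  calc μ (cthickening r B) ≤ μ (⋃ x ∈ N, closedBall x (2 * r)) :=
        measure_mono (hNcov.cthickening_subset_biUnion_closedBall hB)
    _ ≤ N.encard * (ENNReal.ofReal ((2 * r) ^ k) * μ (ball 0 1)) :=
        measure_biUnion_closedBall_le μ hNfin.countable (by positivity)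
    _ = N.encard * m * (ENNReal.ofReal (c⁻¹ * 2 ^ (d + k)) * ENNReal.ofReal r ^ ((k : ℝ) - d))
          * μ (ball 0 1) := by rw [hscale]; ring
    _ ≤ ν B * (ENNReal.ofReal (c⁻¹ * 2 ^ (d + k)) * ENNReal.ofReal r ^ ((k : ℝ) - d))
          * μ (ball 0 1) := by gcongr
    _ = _ := by ring

end AddHaar

lemma ENNReal.ofReal_inv_two_pow (j : ℕ) : ENNReal.ofReal ((2⁻¹ : ℝ) ^ j) = 2⁻¹ ^ j := by
  rw [ENNReal.ofReal_pow (by norm_num), ENNReal.ofReal_inv_of_pos two_pos, ENNReal.ofReal_ofNat]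

lemma ENNReal.rpow_neg_le_rpow_neg {a b : ℝ≥0∞} {t : ℝ} (ht : 0 ≤ t) (hab : a ≤ b) :
    b ^ (-t) ≤ a ^ (-t) := by
  rw [ENNReal.rpow_neg, ENNReal.rpow_neg]
  exact ENNReal.inv_le_inv.2 (ENNReal.rpow_le_rpow hab ht)

lemma ENNReal.exists_le_inv_two_pow_and_rpow_neg_le {δ : ℝ≥0∞} (hδ0 : δ ≠ 0) (hδ1 : δ ≤ 1)
    {t : ℝ} (ht : 0 ≤ t) : ∃ j : ℕ, δ ≤ 2⁻¹ ^ j ∧ δ ^ (-t) ≤ (2 ^ t) ^ (j + 1) := by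
  classical
  have hex := ENNReal.exists_inv_two_pow_lt hδ0
  obtain ⟨j, hj⟩ : ∃ j, Nat.find hex = j + 1 := Nat.exists_eq_succ_of_ne_zero fun h0 ↦ by
    simpa [h0] using (Nat.find_spec hex).trans_le hδ1
  refine ⟨j, not_lt.1 (Nat.find_min hex (by omega)), ?_⟩
  calc δ ^ (-t) ≤ (2⁻¹ ^ (j + 1)) ^ (-t) := rpow_neg_le_rpow_neg ht (hj ▸ Nat.find_spec hex).le
    _ = (2 ^ t) ^ (j + 1) := by
      rw [← ENNReal.rpow_natCast_mul, mul_comm, ENNReal.rpow_mul_natCast, ENNReal.inv_rpow,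
        ENNReal.rpow_neg, inv_inv]

section DyadicShells

variable {X : Type*} [PseudoEMetricSpace X] {F : Set X} {s t : ℝ}

lemma infEDist_rpow_neg_le_one_add_tsum_indicator {y : X} (hy : y ∉ closure F) (ht : 0 ≤ t) :
    infEDist y F ^ (-t) ≤
      1 + ∑' j : ℕ, (cthickening ((2⁻¹ : ℝ) ^ j) F).indicator (fun _ ↦ (2 ^ t) ^ (j + 1)) y := by
  rw [mem_closure_iff_infEDist_zero] at hy
  rcases le_or_gt (infEDist y F) 1 with h1 | h1
  · obtain ⟨j, hj, hjt⟩ := ENNReal.exists_le_inv_two_pow_and_rpow_neg_le hy h1 ht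
    have hyj : y ∈ cthickening ((2⁻¹ : ℝ) ^ j) F := by
      rwa [mem_cthickening_iff, ENNReal.ofReal_inv_two_pow]
    calc infEDist y F ^ (-t)
        ≤ (cthickening ((2⁻¹ : ℝ) ^ j) F).indicator (fun _ ↦ (2 ^ t) ^ (j + 1)) y := by
          rwa [indicator_of_mem hyj]
      _ ≤ _ := ENNReal.le_tsum j
      _ ≤ _ := le_add_self
  · calc infEDist y F ^ (-t) ≤ 1 ^ (-t) := ENNReal.rpow_neg_le_rpow_neg ht h1.le
      _ = 1 := ENNReal.one_rpow _
      _ ≤ _ := le_self_add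

variable [MeasurableSpace X] {μ : Measure X} {K : ℝ≥0∞}

lemma measure_cthickening_inv_two_pow_le
    (hF : ∀ r : ℝ, 0 < r → r ≤ 1 → μ (cthickening r F) ≤ K * ENNReal.ofReal r ^ s) (j : ℕ) :
    μ (cthickening ((2⁻¹ : ℝ) ^ j) F) ≤ K * (2⁻¹ ^ s) ^ j := by
  refine (hF _ (by positivity) (pow_le_one₀ (by norm_num) (by norm_num))).trans_eq ?_
  rw [ENNReal.ofReal_inv_two_pow, ← ENNReal.rpow_natCast_mul, mul_comm (j : ℝ),
    ENNReal.rpow_mul_natCast]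

lemma measure_closure_eq_zero_of_measure_cthickening_le (hK : K ≠ ⊤) (hs : 0 < s)
    (hF : ∀ r : ℝ, 0 < r → r ≤ 1 → μ (cthickening r F) ≤ K * ENNReal.ofReal r ^ s) :
    μ (closure F) = 0 := by
  have hlim : Tendsto (fun j : ℕ ↦ K * (2⁻¹ ^ s) ^ j) atTop (𝓝 0) := by
    simpa using ENNReal.Tendsto.const_mul (ENNReal.tendsto_pow_atTop_nhds_zero_of_lt_one
      (ENNReal.rpow_lt_one (by norm_num) hs)) (Or.inr hK)
  exact le_zero_iff.1 <| ge_of_tendsto' hlim fun j ↦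
    (measure_mono (closure_subset_cthickening _ F)).trans (measure_cthickening_inv_two_pow_le hF j)

theorem setLIntegral_infEDist_rpow_neg_lt_top [OpensMeasurableSpace X] {A : Set X}
    (hA : μ A ≠ ⊤) (hK : K ≠ ⊤) (ht : 0 ≤ t) (hts : t < s)
    (hF : ∀ r : ℝ, 0 < r → r ≤ 1 → μ (cthickening r F) ≤ K * ENNReal.ofReal r ^ s) :
    ∫⁻ y in A, infEDist y F ^ (-t) ∂μ < ⊤ := by
  set N : ℕ → Set X := fun j ↦ cthickening ((2⁻¹ : ℝ) ^ j) F
  have hnull := measure_closure_eq_zero_of_measure_cthickening_le hK (ht.trans_lt hts) hF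
  have hratio : (2 : ℝ≥0∞) ^ t * 2⁻¹ ^ s < 1 := by
    rw [ENNReal.inv_rpow, ← ENNReal.rpow_neg,
      ← ENNReal.rpow_add _ _ two_ne_zero ENNReal.ofNat_ne_top]
    exact ENNReal.rpow_lt_one_of_one_lt_of_neg ENNReal.one_lt_two (by linarith)
  calc ∫⁻ y in A, infEDist y F ^ (-t) ∂μ
      ≤ ∫⁻ y in A, (1 + ∑' j, (N j).indicator (fun _ ↦ (2 ^ t) ^ (j + 1)) y) ∂μ :=
        lintegral_mono_ae <| ae_restrict_of_ae <| (measure_eq_zero_iff_ae_notMem.1 hnull).mono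
          fun y hy ↦ infEDist_rpow_neg_le_one_add_tsum_indicator hy ht
    _ = μ A + ∑' j, (2 ^ t) ^ (j + 1) * μ.restrict A (N j) := by
        rw [lintegral_add_left measurable_const, setLIntegral_one, lintegral_tsum fun j ↦
          (measurable_const.indicator isClosed_cthickening.measurableSet).aemeasurable]
        simp_rw [lintegral_indicator_const isClosed_cthickening.measurableSet]
        rfl
    _ ≤ μ A + ∑' j, 2 ^ t * K * (2 ^ t * 2⁻¹ ^ s) ^ j := by
        refine add_le_add le_rfl (ENNReal.tsum_le_tsum fun j ↦ ?_)
        calc (2 ^ t) ^ (j + 1) * μ.restrict A (N j)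
            ≤ (2 ^ t) ^ (j + 1) * (K * (2⁻¹ ^ s) ^ j) := by
              gcongr
              exact (Measure.restrict_apply_le _ _).trans (measure_cthickening_inv_two_pow_le hF j)
          _ = 2 ^ t * K * (2 ^ t * 2⁻¹ ^ s) ^ j := by ring
    _ < ⊤ := by
        rw [ENNReal.tsum_mul_left]
        exact ENNReal.add_lt_top.2 ⟨hA.lt_top, ENNReal.mul_lt_top (ENNReal.mul_lt_top
          (ENNReal.rpow_lt_top_of_nonneg ht ENNReal.ofNat_ne_top) hK.lt_top)
          (tsum_geometric_lt_top.2 hratio)⟩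

end DyadicShells

theorem statement15_general
    (n : ℕ) (hn : 1 ≤ n)
    (A : Set (EuclideanSpace ℝ (Fin n)))
    (hAne : A.Nonempty) (hAbdd : Bornology.IsBounded A)
    (d : ℝ)
    (B : Set (EuclideanSpace ℝ (Fin n)))
    (hBcomp : IsCompact B) (hsub : frontier A ⊆ B)
    (hdset : ∃ c₁ c₂ : ℝ, 0 < c₁ ∧ c₁ ≤ c₂ ∧
      ∀ x ∈ B, ∀ r : ℝ, 0 < r → r ≤ 1 →
        ENNReal.ofReal (c₁ * r ^ d) ≤ μH[d] (B ∩ Metric.closedBall x r) ∧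
        μH[d] (B ∩ Metric.closedBall x r) ≤ ENNReal.ofReal (c₂ * r ^ d)) :
    ∀ t : ℝ, 0 ≤ t → t < (n : ℝ) - d →
      (∫⁻ y in A, ENNReal.ofReal (Metric.infDist y (frontier A)) ^ (-t)) < ⊤ := by
  intro t ht0 hts
  obtain ⟨c₁, c₂, hc₁, -, hB⟩ := hdset
  have : Nonempty (Fin n) := ⟨⟨0, hn⟩⟩
  have hfront : (frontier A).Nonempty :=
    nonempty_frontier_iff.2 ⟨hAne, fun h ↦ NormedSpace.unbounded_univ ℝ _ (h ▸ hAbdd)⟩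
  have hμH : μH[d] B ≠ ⊤ := (hBcomp.measure_lt_top_of_nhdsWithin fun x hx ↦
    ⟨B ∩ closedBall x 1, inter_mem_nhdsWithin B (closedBall_mem_nhds x one_pos),
      (hB x hx 1 one_pos le_rfl).2.trans_lt ENNReal.ofReal_lt_top⟩).ne
  obtain ⟨K, hK, hvol⟩ := exists_measure_cthickening_le_mul_rpow volume hBcomp hμH hc₁
    fun x hx r hr0 hr1 ↦ (hB x hx r hr0 hr1).1
  rw [finrank_euclideanSpace_fin] at hvol
  calc ∫⁻ y in A, ENNReal.ofReal (infDist y (frontier A)) ^ (-t)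
      ≤ ∫⁻ y in A, infEDist y B ^ (-t) := lintegral_mono fun y ↦ by
        refine ENNReal.rpow_neg_le_rpow_neg ht0 ?_
        rw [infDist, ENNReal.ofReal_toReal (infEDist_ne_top hfront)]
        exact infEDist_anti hsub
    _ < ⊤ := setLIntegral_infEDist_rpow_neg_lt_top hAbdd.measure_lt_top.ne hK ht0 hts hvol

/-- Let A ⊆ ℝⁿ be a non-empty bounded measurable set whose
boundary ∂A is contained in a compact d-set for some 0 ≤ d < n. Then for every
t with 0 ≤ t < n − d, the integral ∫_A dist(y,∂A)^{−t} dy is finite. (The power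
of the distance is taken in ℝ≥0∞, so that 0^{−t} = ∞ for t > 0 and 0^0 = 1.) -/
theorem statement15
    (n : ℕ) (hn : 1 ≤ n)
    (A : Set (EuclideanSpace ℝ (Fin n)))
    (hAne : A.Nonempty) (hAbdd : Bornology.IsBounded A) (hAmeas : MeasurableSet A)
    (d : ℝ) (hd0 : 0 ≤ d) (hdn : d < n)
    (B : Set (EuclideanSpace ℝ (Fin n)))
    (hBcomp : IsCompact B) (hsub : frontier A ⊆ B)
    (hdset : ∃ c₁ c₂ : ℝ, 0 < c₁ ∧ c₁ ≤ c₂ ∧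
      ∀ x ∈ B, ∀ r : ℝ, 0 < r → r ≤ 1 →
        ENNReal.ofReal (c₁ * r ^ d) ≤ μH[d] (B ∩ Metric.closedBall x r) ∧
        μH[d] (B ∩ Metric.closedBall x r) ≤ ENNReal.ofReal (c₂ * r ^ d)) :
    ∀ t : ℝ, 0 ≤ t → t < (n : ℝ) - d →
      (∫⁻ y in A, ENNReal.ofReal (Metric.infDist y (frontier A)) ^ (-t)) < ⊤ :=
  statement15_general n hn A hAne hAbdd d B hBcomp hsub hdset
end

section
/- Let Γ ⊆ ℝⁿ be an n-attractor and suppose ∂Γ is contained in a compact d-set for some d with n − 1 ≤ d < n. Let Ω denote either int Γ or Γᶜ = ℝⁿ ∖ Γ. Then Ω belongs to the class D^t for every t with 0 < t < n − d. -/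
open Metric MeasureTheory Set
open scoped ENNReal

/-!
Since `∂Ω ⊆ ∂Γ` lies in the compact `d`-set `B`, it suffices to control the volume of
neighbourhoods of `B`. By the Vitali covering lemma there are disjoint `δ`-balls centred in
`B ∩ B(x, 2r)` whose fourfold enlargements cover the `δ`-neighbourhood of `B` inside `B(x, r)`.
Each of them carries `H^d`-mass `≳ δ^d`, and together they carry `≲ r^d`, so there are
`≲ (r / δ)^d` of them and that neighbourhood has volume `≲ δ^(n-d) r^d`. Splitting
`B(x, r) ∖ ∂Ω` into the dyadic shells `r 2^(-k-1) < dist(·, ∂Ω) ≤ r 2^(-k)`, the `k`-th shell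
contributes `≲ r^(n-t) 2^(k (t - (n - d)))` to the integral, a geometric series because
`t < n - d`.
-/

theorem Finset.card_mul_le_measure_of_pairwiseDisjoint {α ι : Type*} [MeasurableSpace α]
    (μ : Measure α) {u : Finset ι} {A : ι → Set α} {S : Set α} {a : ℝ≥0∞}
    (hA : ∀ i ∈ u, MeasurableSet (A i)) (hdisj : (u : Set ι).PairwiseDisjoint A)
    (hAS : ∀ i ∈ u, A i ⊆ S) (ha : ∀ i ∈ u, a ≤ μ (A i)) : u.card * a ≤ μ S :=
  calc u.card * a = ∑ _i ∈ u, a := by rw [Finset.sum_const, nsmul_eq_mul]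
    _ ≤ ∑ i ∈ u, μ (A i) := Finset.sum_le_sum ha
    _ = μ (⋃ i ∈ u, A i) := (measure_biUnion_finset hdisj hA).symm
    _ ≤ μ S := measure_mono (iUnion₂_subset hAS)

theorem Set.Finite.of_pairwiseDisjoint_of_le_measure {α ι : Type*} [MeasurableSpace α]
    (μ : Measure α) {u : Set ι} {A : ι → Set α} {S : Set α} {a : ℝ≥0∞} (ha : a ≠ 0)
    (hS : μ S ≠ ∞) (hA : ∀ i ∈ u, MeasurableSet (A i)) (hdisj : u.PairwiseDisjoint A)
    (hAS : ∀ i ∈ u, A i ⊆ S) (haA : ∀ i ∈ u, a ≤ μ (A i)) : u.Finite := by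
  by_contra hu
  obtain ⟨N, hN⟩ := ENNReal.exists_nat_mul_gt ha hS
  obtain ⟨t, htu, rfl⟩ := Set.Infinite.exists_subset_card_eq hu N
  exact (t.card_mul_le_measure_of_pairwiseDisjoint μ (fun i hi => hA i (htu hi))
    (hdisj.subset htu) (fun i hi => hAS i (htu hi)) (fun i hi => haA i (htu hi))).not_gt hN

theorem IsCompact.exists_measure_inter_closedBall_le {X : Type*} [PseudoMetricSpace X]
    [MeasurableSpace X] (μ : Measure X) {B : Set X} (hB : IsCompact B) {c d : ℝ} (hd : 0 ≤ d)
    (hup : ∀ x ∈ B, ∀ r : ℝ, 0 < r → r ≤ 1 →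
      μ (B ∩ closedBall x r) ≤ ENNReal.ofReal (c * r ^ d)) :
    ∃ K : ℝ, 0 < K ∧ ∀ x ∈ B, ∀ r : ℝ, 0 < r →
      μ (B ∩ closedBall x r) ≤ ENNReal.ofReal (K * r ^ d) := by
  have hfin : μ B ≠ ∞ := (hB.measure_lt_top_of_nhdsWithin fun x hx =>
    ⟨B ∩ closedBall x 1, inter_mem_nhdsWithin _ (closedBall_mem_nhds x one_pos),
      (hup x hx 1 one_pos le_rfl).trans_lt ENNReal.ofReal_lt_top⟩).ne
  refine ⟨max c (μ B).toReal + 1, by positivity, fun x hx r hr => ?_⟩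
  rcases le_or_gt r 1 with hr1 | hr1
  · refine (hup x hx r hr hr1).trans (ENNReal.ofReal_le_ofReal ?_)
    gcongr
    linarith [le_max_left c (μ B).toReal]
  · calc μ (B ∩ closedBall x r) ≤ μ B := measure_mono inter_subset_left
      _ = ENNReal.ofReal (μ B).toReal := (ENNReal.ofReal_toReal hfin).symm
      _ ≤ ENNReal.ofReal ((max c (μ B).toReal + 1) * r ^ d) := by
        refine ENNReal.ofReal_le_ofReal ?_
        have : 1 ≤ r ^ d := Real.one_le_rpow hr1.le hd
        nlinarith [le_max_right c (μ B).toReal, ENNReal.toReal_nonneg (a := μ B)]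

theorem IsCompact.exists_pairwiseDisjoint_closedBall_cover {X : Type*} [PseudoMetricSpace X]
    {B : Set X} (hB : IsCompact B) (x : X) {r δ : ℝ} (hδ : 0 ≤ δ) (hδr : δ ≤ r) :
    ∃ u ⊆ B, u.PairwiseDisjoint (closedBall · δ) ∧
      (∀ b ∈ u, closedBall b δ ⊆ closedBall x (3 * r)) ∧
      closedBall x r ∩ cthickening δ B ⊆ ⋃ b ∈ u, closedBall b (4 * δ) := by
  obtain ⟨u, huT, hdisj, hcov⟩ := Vitali.exists_disjoint_subfamily_covering_enlargement_closedBall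
    (B ∩ closedBall x (2 * r)) id (fun _ => δ) δ (fun _ _ => le_rfl) 4 (by norm_num)
  refine ⟨u, fun b hb => (huT hb).1, hdisj, fun b hb => ?_, ?_⟩
  · have : dist b x ≤ 2 * r := (huT hb).2
    exact closedBall_subset_closedBall' (by linarith)
  · rintro y ⟨hyx, hyB⟩
    rw [hB.cthickening_eq_biUnion_closedBall hδ] at hyB
    obtain ⟨z, hzB, hyz⟩ := mem_iUnion₂.1 hyB
    have hzx : dist z x ≤ 2 * r := by
      have : dist y x ≤ r := hyx
      have : dist y z ≤ δ := hyz
      linarith [dist_triangle_left z x y]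
    obtain ⟨b, hbu, hzb⟩ := hcov z ⟨hzB, hzx⟩
    exact mem_iUnion₂.2 ⟨b, hbu, hzb hyz⟩

theorem measure_closedBall_inter_cthickening_le {E : Type*} [NormedAddCommGroup E]
    [NormedSpace ℝ E] [FiniteDimensional ℝ E] [MeasurableSpace E] [BorelSpace E]
    (μ ν : Measure E) [μ.IsAddHaarMeasure] {B : Set E} (hB : IsCompact B) {c K d : ℝ}
    (hc : 0 < c) (hK : 0 ≤ K)
    (hlow : ∀ x ∈ B, ∀ r : ℝ, 0 < r → r ≤ 1 →
      ENNReal.ofReal (c * r ^ d) ≤ ν (B ∩ closedBall x r))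
    (hup : ∀ x ∈ B, ∀ r : ℝ, 0 < r → ν (B ∩ closedBall x r) ≤ ENNReal.ofReal (K * r ^ d))
    {x : E} (hx : x ∈ B) {r δ : ℝ} (hδ : 0 < δ) (hδr : δ ≤ r) (hr1 : r ≤ 1) :
    μ (closedBall x r ∩ cthickening δ B) ≤
      ENNReal.ofReal (K * 3 ^ d * 4 ^ Module.finrank ℝ E * (μ (closedBall 0 1)).toReal / c *
        δ ^ ((Module.finrank ℝ E : ℝ) - d) * r ^ d) := by
  set n := Module.finrank ℝ E
  set v := (μ (closedBall (0 : E) 1)).toReal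
  have hr : 0 < r := hδ.trans_le hδr
  obtain ⟨u, huB, hdisj, hsub, hcover⟩ := hB.exists_pairwiseDisjoint_closedBall_cover x hδ.le hδr
  have hsmall : ∀ b ∈ u, B ∩ closedBall b δ ⊆ B ∩ closedBall x (3 * r) :=
    fun b hb => inter_subset_inter_right _ (hsub b hb)
  have hmeas : ∀ b ∈ u, MeasurableSet (B ∩ closedBall b δ) :=
    fun b _ => hB.isClosed.measurableSet.inter measurableSet_closedBall
  have hdisjB : u.PairwiseDisjoint fun b => B ∩ closedBall b δ :=
    hdisj.mono fun _ => inter_subset_right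
  have hlowu : ∀ b ∈ u, ENNReal.ofReal (c * δ ^ d) ≤ ν (B ∩ closedBall b δ) :=
    fun b hb => hlow b (huB hb) δ hδ (hδr.trans hr1)
  have hlarge : ν (B ∩ closedBall x (3 * r)) ≤ ENNReal.ofReal (K * (3 * r) ^ d) :=
    hup x hx (3 * r) (by positivity)
  have hu : u.Finite := Set.Finite.of_pairwiseDisjoint_of_le_measure ν
    (ENNReal.ofReal_pos.2 (by positivity)).ne' (ne_top_of_le_ne_top ENNReal.ofReal_ne_top hlarge)
    hmeas hdisjB hsmall hlowu
  have hcard : (hu.toFinset.card : ℝ) * (c * δ ^ d) ≤ K * (3 * r) ^ d := by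
    have := (hu.toFinset.card_mul_le_measure_of_pairwiseDisjoint ν (by simpa using hmeas)
      (by simpa using hdisjB) (by simpa using hsmall) (by simpa using hlowu)).trans hlarge
    rwa [← ENNReal.ofReal_natCast, ← ENNReal.ofReal_mul (by positivity),
      ENNReal.ofReal_le_ofReal_iff (by positivity)] at this
  have hball : ∀ b : E, μ (closedBall b (4 * δ)) = ENNReal.ofReal ((4 * δ) ^ n * v) := by
    intro b
    rw [Measure.addHaar_closedBall' μ b (by positivity), ENNReal.ofReal_mul (by positivity),
      ENNReal.ofReal_toReal measure_closedBall_lt_top.ne]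
  calc μ (closedBall x r ∩ cthickening δ B)
      ≤ ∑ b ∈ hu.toFinset, μ (closedBall b (4 * δ)) :=
        (measure_mono (hcover.trans_eq (by simp))).trans (measure_biUnion_finset_le _ _)
    _ = ENNReal.ofReal (hu.toFinset.card * ((4 * δ) ^ n * v)) := by
        rw [Finset.sum_congr rfl fun b _ => hball b, Finset.sum_const, nsmul_eq_mul,
          ENNReal.ofReal_mul (Nat.cast_nonneg _), ENNReal.ofReal_natCast]
    _ ≤ _ := by
        refine ENNReal.ofReal_le_ofReal ?_
        calc (hu.toFinset.card : ℝ) * ((4 * δ) ^ n * v)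
            = hu.toFinset.card * (c * δ ^ d) * (4 ^ n * v * δ ^ n / (c * δ ^ d)) := by
              rw [mul_pow]; field_simp
          _ ≤ K * (3 * r) ^ d * (4 ^ n * v * δ ^ n / (c * δ ^ d)) := by gcongr
          _ = _ := by
              rw [Real.mul_rpow zero_le_three hr.le, Real.rpow_sub hδ, Real.rpow_natCast]
              field_simp

theorem Metric.mem_cthickening_of_infDist_le {X : Type*} [PseudoMetricSpace X] {s : Set X}
    {x : X} {δ : ℝ} (hs : s.Nonempty) (h : infDist x s ≤ δ) : x ∈ cthickening δ s := by
  rw [mem_cthickening_iff, ← ENNReal.ofReal_toReal (infEDist_ne_top hs)]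
  exact ENNReal.ofReal_le_ofReal h

theorem exists_dyadic_shell {ε r : ℝ} (hε : 0 < ε) (hεr : ε ≤ r) :
    ∃ k : ℕ, r / 2 ^ (k + 1) < ε ∧ ε ≤ r / 2 ^ k := by
  obtain ⟨k, hk, hk'⟩ := exists_nat_pow_near ((one_le_div hε).2 hεr) one_lt_two
  refine ⟨k, ?_, ?_⟩
  · rw [div_lt_iff₀ (by positivity), mul_comm]
    rwa [div_lt_iff₀ hε] at hk'
  · rw [le_div_iff₀ (by positivity), mul_comm]
    rwa [le_div_iff₀ hε] at hk

theorem dyadic_rpow_eq {r a b t C : ℝ} (hr : 0 < r) (k : ℕ) :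
    (r / 2 ^ (k + 1)) ^ (-t) * (C * (r / 2 ^ k) ^ a * r ^ b) =
      C * 2 ^ t * r ^ (a + b - t) * (2 ^ (t - a)) ^ k := by
  rw [Real.div_rpow hr.le (by positivity), Real.div_rpow hr.le (by positivity),
    ← Real.rpow_pow_comm zero_le_two, ← Real.rpow_pow_comm zero_le_two, Real.rpow_neg hr.le,
    Real.rpow_neg zero_le_two, Real.rpow_sub two_pos, Real.rpow_sub hr, Real.rpow_add hr,
    inv_pow, div_pow]
  field_simp
  ring

theorem lintegral_infDist_rpow_neg_le {X : Type*} [PseudoMetricSpace X] [MeasurableSpace X]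
    (μ : Measure X) {F : Set X} (hF : IsClosed F) {a b t C₀ : ℝ} (ht : 0 < t) (hta : t < a)
    (hvol : ∀ x ∈ F, ∀ r δ : ℝ, 0 < δ → δ ≤ r → r ≤ 1 →
      μ (closedBall x r ∩ cthickening δ F) ≤ ENNReal.ofReal (C₀ * δ ^ a * r ^ b))
    {x : X} (hx : x ∈ F) {r : ℝ} (hr : 0 < r) (hr1 : r ≤ 1) :
    ∫⁻ y in closedBall x r \ F, ENNReal.ofReal (infDist y F) ^ (-t) ∂μ ≤
      ENNReal.ofReal (C₀ * 2 ^ t * (1 - 2 ^ (t - a))⁻¹ * r ^ (a + b - t)) := by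
  set q : ℝ := 2 ^ (t - a)
  have hq0 : 0 ≤ q := by positivity
  have hq1 : q < 1 := Real.rpow_lt_one_of_one_lt_of_neg one_lt_two (by linarith)
  set shell : ℕ → Set X := fun k =>
    closedBall x r ∩ cthickening (r / 2 ^ k) F ∩ {y | r / 2 ^ (k + 1) < infDist y F}
  have hcover : closedBall x r \ F ⊆ ⋃ k, shell k := by
    rintro y ⟨hyr, hyF⟩
    have hpos : 0 < infDist y F := (hF.notMem_iff_infDist_pos ⟨x, hx⟩).1 hyF
    have hle : infDist y F ≤ r := (infDist_le_dist_of_mem hx).trans hyr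
    obtain ⟨k, hlt, hle'⟩ := exists_dyadic_shell hpos hle
    exact mem_iUnion.2 ⟨k, ⟨hyr, mem_cthickening_of_infDist_le ⟨x, hx⟩ hle'⟩, hlt⟩
  have hshell : ∀ k, ∫⁻ y in shell k, ENNReal.ofReal (infDist y F) ^ (-t) ∂μ ≤
      ENNReal.ofReal (C₀ * 2 ^ t * r ^ (a + b - t)) * ENNReal.ofReal q ^ k := by
    intro k
    have hδ : 0 < r / 2 ^ (k + 1) := by positivity
    calc ∫⁻ y in shell k, ENNReal.ofReal (infDist y F) ^ (-t) ∂μ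
        ≤ ∫⁻ _ in shell k, ENNReal.ofReal ((r / 2 ^ (k + 1)) ^ (-t)) ∂μ := by
          refine setLIntegral_mono measurable_const fun y hy => ?_
          rw [ENNReal.ofReal_rpow_of_pos (hδ.trans hy.2)]
          exact ENNReal.ofReal_le_ofReal
            (Real.rpow_le_rpow_of_nonpos hδ hy.2.le (neg_nonpos.2 ht.le))
      _ = ENNReal.ofReal ((r / 2 ^ (k + 1)) ^ (-t)) * μ (shell k) := setLIntegral_const _ _
      _ ≤ ENNReal.ofReal ((r / 2 ^ (k + 1)) ^ (-t)) *
            ENNReal.ofReal (C₀ * (r / 2 ^ k) ^ a * r ^ b) := by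
          gcongr
          exact (measure_mono inter_subset_left).trans
            (hvol x hx r _ (by positivity) (div_le_self hr.le (one_le_pow₀ one_le_two)) hr1)
      _ = ENNReal.ofReal (C₀ * 2 ^ t * r ^ (a + b - t)) * ENNReal.ofReal q ^ k := by
          rw [← ENNReal.ofReal_mul (by positivity), ← ENNReal.ofReal_pow hq0,
            ← ENNReal.ofReal_mul' (by positivity), dyadic_rpow_eq hr]
  calc ∫⁻ y in closedBall x r \ F, ENNReal.ofReal (infDist y F) ^ (-t) ∂μ
      ≤ ∫⁻ y in ⋃ k, shell k, ENNReal.ofReal (infDist y F) ^ (-t) ∂μ :=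
        lintegral_mono_set hcover
    _ ≤ ∑' k, ∫⁻ y in shell k, ENNReal.ofReal (infDist y F) ^ (-t) ∂μ :=
        lintegral_iUnion_le _ _
    _ ≤ ∑' k, ENNReal.ofReal (C₀ * 2 ^ t * r ^ (a + b - t)) * ENNReal.ofReal q ^ k :=
        ENNReal.tsum_le_tsum hshell
    _ = ENNReal.ofReal (C₀ * 2 ^ t * (1 - q)⁻¹ * r ^ (a + b - t)) := by
        rw [ENNReal.tsum_mul_left, ENNReal.tsum_geometric, ← ENNReal.ofReal_one,
          ← ENNReal.ofReal_sub 1 hq0, ← ENNReal.ofReal_inv_of_pos (by linarith),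
          ← ENNReal.ofReal_mul' (inv_nonneg.2 (by linarith))]
        congr 1
        ring

theorem statement17_general
    (n : ℕ) (hn : 1 ≤ n)
    (Γ : Set (EuclideanSpace ℝ (Fin n)))
    (d : ℝ) (hd1 : (n : ℝ) - 1 ≤ d)
    (B : Set (EuclideanSpace ℝ (Fin n)))
    (hBcomp : IsCompact B) (hsub : frontier Γ ⊆ B)
    (hdset : ∃ c₁ c₂ : ℝ, 0 < c₁ ∧ c₁ ≤ c₂ ∧
      ∀ x ∈ B, ∀ r : ℝ, 0 < r → r ≤ 1 →
        ENNReal.ofReal (c₁ * r ^ d) ≤ μH[d] (B ∩ Metric.closedBall x r) ∧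
        μH[d] (B ∩ Metric.closedBall x r) ≤ ENNReal.ofReal (c₂ * r ^ d))
    (Ω : Set (EuclideanSpace ℝ (Fin n)))
    (hΩ : Ω = interior Γ ∨ Ω = Γᶜ) :
    ∀ t : ℝ, 0 < t → t < (n : ℝ) - d →
      ∃ C : ℝ, 0 < C ∧ ∀ x ∈ frontier Ω, ∀ r : ℝ, 0 < r → r ≤ 1 →
        (∫⁻ y in Metric.closedBall x r \ frontier Ω,
          ENNReal.ofReal (Metric.infDist y (frontier Ω)) ^ (-t))
          ≤ ENNReal.ofReal (C * r ^ ((n : ℝ) - t)) := by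
  intro t ht htd
  obtain ⟨c₁, c₂, hc₁, -, hreg⟩ := hdset
  have hd : 0 ≤ d := by linarith [(Nat.one_le_cast.2 hn : (1 : ℝ) ≤ n)]
  obtain ⟨K, hK, hup⟩ := hBcomp.exists_measure_inter_closedBall_le μH[d] hd
    fun x hx r hr hr1 => (hreg x hx r hr hr1).2
  have hΩB : frontier Ω ⊆ B := by
    rcases hΩ with rfl | rfl
    · exact frontier_interior_subset.trans hsub
    · rwa [frontier_compl]
  set C₀ := K * 3 ^ d * 4 ^ n * (volume (closedBall (0 : EuclideanSpace ℝ (Fin n)) 1)).toReal / c₁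
  have hvol : ∀ x ∈ frontier Ω, ∀ r δ : ℝ, 0 < δ → δ ≤ r → r ≤ 1 →
      volume (closedBall x r ∩ cthickening δ (frontier Ω)) ≤
        ENNReal.ofReal (C₀ * δ ^ ((n : ℝ) - d) * r ^ d) := by
    intro x hx r δ hδ hδr hr1
    have := measure_closedBall_inter_cthickening_le volume μH[d] hBcomp hc₁ hK.le
      (fun x hx r hr hr1 => (hreg x hx r hr hr1).1) hup (hΩB hx) hδ hδr hr1
    rw [finrank_euclideanSpace_fin] at this
    exact (measure_mono (inter_subset_inter_right _ (cthickening_subset_of_subset δ hΩB))).trans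
      this
  have hq : (2 : ℝ) ^ (t - ((n : ℝ) - d)) < 1 :=
    Real.rpow_lt_one_of_one_lt_of_neg one_lt_two (by linarith)
  have hv : 0 < (volume (closedBall (0 : EuclideanSpace ℝ (Fin n)) 1)).toReal :=
    ENNReal.toReal_pos (measure_closedBall_pos _ _ one_pos).ne' measure_closedBall_lt_top.ne
  refine ⟨C₀ * 2 ^ t * (1 - 2 ^ (t - ((n : ℝ) - d)))⁻¹,
    mul_pos (by positivity) (inv_pos.2 (sub_pos.2 hq)), fun x hx r hr hr1 => ?_⟩
  have := lintegral_infDist_rpow_neg_le volume isClosed_frontier ht htd hvol hx hr hr1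
  rwa [sub_add_cancel] at this

/-- Let Γ be an n-attractor with ∂Γ contained in a compact d-set
for some n − 1 ≤ d < n, and let Ω be either int Γ or Γᶜ. Then Ω ∈ D^t for all
0 < t < n − d; i.e., ∃ C > 0 with ∫_{B(x,r)∖∂Ω} dist(y,∂Ω)^{−t} dy ≤ C·r^{n−t}
for all x ∈ ∂Ω and 0 < r ≤ 1. -/
theorem statement17
    (n : ℕ) (hn : 1 ≤ n)
    (M : ℕ) (hM : 2 ≤ M)
    (s : Fin M → EuclideanSpace ℝ (Fin n) → EuclideanSpace ℝ (Fin n))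
    (ρ : Fin M → ℝ)
    (hρ : ∀ m, ρ m ∈ Set.Ioo (0 : ℝ) 1)
    (hsim : ∀ m x y, dist (s m x) (s m y) = ρ m * dist x y)
    (Γ : Set (EuclideanSpace ℝ (Fin n)))
    (hΓne : Γ.Nonempty) (hΓcomp : IsCompact Γ)
    (hattr : Γ = ⋃ m, s m '' Γ)
    (hOSC : ∃ O : Set (EuclideanSpace ℝ (Fin n)), O.Nonempty ∧ IsOpen O ∧
      Bornology.IsBounded O ∧ (⋃ m, s m '' O) ⊆ O ∧
      ∀ m m', m ≠ m' → Disjoint (s m '' O) (s m' '' O))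
    (hsum : ∑ m, ρ m ^ n = 1)
    (d : ℝ) (hd1 : (n : ℝ) - 1 ≤ d) (hdn : d < n)
    (B : Set (EuclideanSpace ℝ (Fin n)))
    (hBcomp : IsCompact B) (hsub : frontier Γ ⊆ B)
    (hdset : ∃ c₁ c₂ : ℝ, 0 < c₁ ∧ c₁ ≤ c₂ ∧
      ∀ x ∈ B, ∀ r : ℝ, 0 < r → r ≤ 1 →
        ENNReal.ofReal (c₁ * r ^ d) ≤ μH[d] (B ∩ Metric.closedBall x r) ∧
        μH[d] (B ∩ Metric.closedBall x r) ≤ ENNReal.ofReal (c₂ * r ^ d))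
    (Ω : Set (EuclideanSpace ℝ (Fin n)))
    (hΩ : Ω = interior Γ ∨ Ω = Γᶜ) :
    ∀ t : ℝ, 0 < t → t < (n : ℝ) - d →
      ∃ C : ℝ, 0 < C ∧ ∀ x ∈ frontier Ω, ∀ r : ℝ, 0 < r → r ≤ 1 →
        (∫⁻ y in Metric.closedBall x r \ frontier Ω,
          ENNReal.ofReal (Metric.infDist y (frontier Ω)) ^ (-t))
          ≤ ENNReal.ofReal (C * r ^ ((n : ℝ) - t)) :=
  statement17_general n hn Γ d hd1 B hBcomp hsub hdset Ω hΩ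
end

section
/- Let F ⊆ ℝⁿ be non-empty and bounded, let r₀ > 0 and s > 0. Suppose there exists c > 0 such that ∫_{B(x,r)} dist(y,F)^{s−n} dy ≤ c·r^s for all x ∈ F and all 0 < r < r₀. Then there exists c' > 0 such that ∫_{B(x,r)} dist(y,F)^{s−n} dy ≤ c'·r^s for all x ∈ F and all r > 0. (Equivalently, for bounded non-empty F the truncated Aikawa condition I_A^{r₀}(F) coincides with the untruncated one I_A(F).) -/
/-!
If `s ≥ n`, the integrand is at most `r ^ (s - n)` on `B(x, r)`, so the integral is at most
`|B(0, 1)| r ^ s`. If `s < n`, only radii `r ≥ r₀ / 2` matter. Being totally bounded, `F` lies in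
finitely many balls of radius `r₀ / 4` centred in `F`, so its `r₀ / 4`-neighbourhood `N` lies in
finitely many balls `B(z, r₀ / 2)` and the hypothesis makes `∫_N` finite. Off `N`,
`|y - x| ≤ (1 + 4 diam F / r₀) dist(y, F)`, so there the integrand is dominated by a multiple of
`|y - x| ^ (s - n)`, whose integral over `B(x, r)` is, by scaling, `r ^ s` times its (finite)
value for `r = 1`.
-/

open Metric MeasureTheory Set Module
open scoped ENNReal

namespace ENNReal

theorem rpow_le_rpow_of_nonpos {x y : ℝ≥0∞} {z : ℝ} (hz : z ≤ 0) (h : x ≤ y) :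
    y ^ z ≤ x ^ z := by
  rw [← neg_neg z, rpow_neg x, rpow_neg y]
  exact ENNReal.inv_le_inv' (rpow_le_rpow h (by linarith))

theorem add_le_div_rpow_add_mul_rpow (A B : ℝ≥0∞) {ρ r s : ℝ} (hρ : 0 < ρ) (hr : ρ ≤ r)
    (hs : 0 ≤ s) :
    A + B * ENNReal.ofReal r ^ s ≤ (A / ENNReal.ofReal ρ ^ s + B) * ENNReal.ofReal r ^ s := by
  rw [add_mul]
  gcongr
  calc A = A / ENNReal.ofReal ρ ^ s * ENNReal.ofReal ρ ^ s :=
        (ENNReal.div_mul_cancel (by positivity) (by finiteness)).symm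
    _ ≤ A / ENNReal.ofReal ρ ^ s * ENNReal.ofReal r ^ s := by gcongr

theorem exists_pos_mul_rpow_le_ofReal {C : ℝ≥0∞} (hC : C ≠ ∞) (s : ℝ) :
    ∃ c : ℝ, 0 < c ∧ ∀ r : ℝ, 0 < r → C * ENNReal.ofReal r ^ s ≤ ENNReal.ofReal (c * r ^ s) := by
  refine ⟨C.toReal + 1, by positivity, fun r hr => ?_⟩
  rw [ENNReal.ofReal_mul (by positivity), ← ENNReal.ofReal_rpow_of_pos hr]
  gcongr
  rw [← ENNReal.ofReal_toReal hC]
  gcongr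
  simp

end ENNReal

section Metric

variable {X : Type*} [PseudoMetricSpace X]

theorem dist_le_one_add_diam_div_mul_infDist {F : Set X} (hF : Bornology.IsBounded F) {x y : X}
    (hx : x ∈ F) {t : ℝ} (ht : 0 < t) (hy : t ≤ infDist y F) :
    dist y x ≤ (1 + diam F / t) * infDist y F := by
  have hdiam : diam F ≤ diam F / t * infDist y F := by
    rw [div_mul_eq_mul_div, le_div_iff₀ ht]
    exact mul_le_mul_of_nonneg_left hy diam_nonneg
  linarith [dist_le_infDist_add_diam (x := y) hF hx]

theorem setLIntegral_thickening_lt_top [MeasurableSpace X] {μ : Measure X} {g : X → ℝ≥0∞}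
    {F : Set X} (hF : TotallyBounded F) {δ : ℝ} (hδ : 0 < δ)
    (hg : ∀ x ∈ F, ∫⁻ y in closedBall x (2 * δ), g y ∂μ < ∞) :
    ∫⁻ y in thickening δ F, g y ∂μ < ∞ := by
  obtain ⟨T, hTF, hTfin, hFT⟩ := finite_approx_of_totallyBounded hF δ hδ
  have : Fintype T := hTfin.fintype
  have hcover : thickening δ F ⊆ ⋃ z : T, closedBall (z : X) (2 * δ) := by
    intro y hy
    obtain ⟨w, hwF, hyw⟩ := mem_thickening_iff.1 hy
    obtain ⟨z, hzT, hwz⟩ := mem_iUnion₂.1 (hFT hwF)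
    refine mem_iUnion.2 ⟨⟨z, hzT⟩, mem_closedBall.2 ?_⟩
    linarith [dist_triangle y w z, mem_ball.1 hwz]
  calc ∫⁻ y in thickening δ F, g y ∂μ
      ≤ ∫⁻ y in ⋃ z : T, closedBall (z : X) (2 * δ), g y ∂μ := lintegral_mono_set hcover
    _ ≤ ∑' z : T, ∫⁻ y in closedBall (z : X) (2 * δ), g y ∂μ := lintegral_iUnion_le _ _
    _ < ∞ := by
        rw [tsum_fintype]
        exact ENNReal.sum_lt_top.2 fun z _ => hg z (hTF z.2)

end Metric

section Normed

variable {E : Type*} [SeminormedAddCommGroup E] [MeasurableSpace E] [OpensMeasurableSpace E]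

theorem setLIntegral_closedBall_diff_thickening_infDist_rpow_le (μ : Measure E) {F : Set E}
    (hF : Bornology.IsBounded F) {x : E} (hx : x ∈ F) {t : ℝ} (ht : 0 < t) {p : ℝ} (hp : p ≤ 0)
    (r : ℝ) :
    ∫⁻ y in closedBall x r \ thickening t F, ENNReal.ofReal (infDist y F) ^ p ∂μ ≤
      ENNReal.ofReal (1 + diam F / t) ^ (-p) * ∫⁻ y in closedBall x r, ‖y - x‖ₑ ^ p ∂μ := by
  set a := ENNReal.ofReal (1 + diam F / t)
  have ha0 : a ≠ 0 := by
    have : 0 ≤ diam F / t := div_nonneg diam_nonneg ht.le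
    simp only [a, ne_eq, ENNReal.ofReal_eq_zero, not_le]
    linarith
  have hpointwise : ∀ y ∈ closedBall x r \ thickening t F,
      ENNReal.ofReal (infDist y F) ^ p ≤ a ^ (-p) * ‖y - x‖ₑ ^ p := by
    rintro y ⟨-, hy⟩
    have hty : t ≤ infDist y F :=
      not_lt.1 fun h => hy ((mem_thickening_iff_infDist_lt ⟨x, hx⟩).2 h)
    have hdist : ‖y - x‖ₑ ≤ a * ENNReal.ofReal (infDist y F) := by
      rw [← ENNReal.ofReal_mul (by positivity), ← ofReal_norm, ← dist_eq_norm]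
      exact ENNReal.ofReal_le_ofReal (dist_le_one_add_diam_div_mul_infDist hF hx ht hty)
    calc ENNReal.ofReal (infDist y F) ^ p
        = a ^ (-p) * (a * ENNReal.ofReal (infDist y F)) ^ p := by
          rw [ENNReal.mul_rpow_of_ne_top (by simp [a]) (by simp), ← mul_assoc,
            ← ENNReal.rpow_add _ _ ha0 (by simp [a]), neg_add_cancel, ENNReal.rpow_zero, one_mul]
      _ ≤ a ^ (-p) * ‖y - x‖ₑ ^ p := mul_le_mul_right (ENNReal.rpow_le_rpow_of_nonpos hp hdist) _
  calc ∫⁻ y in closedBall x r \ thickening t F, ENNReal.ofReal (infDist y F) ^ p ∂μ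
      ≤ ∫⁻ y in closedBall x r \ thickening t F, a ^ (-p) * ‖y - x‖ₑ ^ p ∂μ :=
        setLIntegral_mono' (measurableSet_closedBall.diff isOpen_thickening.measurableSet)
          hpointwise
    _ ≤ ∫⁻ y in closedBall x r, a ^ (-p) * ‖y - x‖ₑ ^ p ∂μ := lintegral_mono_set sdiff_subset
    _ = a ^ (-p) * ∫⁻ y in closedBall x r, ‖y - x‖ₑ ^ p ∂μ :=
        lintegral_const_mul' _ _ (by simp [a, hp])

end Normed

section Haar

variable {E : Type*} [NormedAddCommGroup E] [NormedSpace ℝ E] [FiniteDimensional ℝ E]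
  [MeasurableSpace E] [BorelSpace E] (μ : Measure E) [μ.IsAddHaarMeasure]

theorem MeasureTheory.Measure.lintegral_comp_inv_smul_of_pos (f : E → ℝ≥0∞) {R : ℝ}
    (hR : 0 < R) :
    ∫⁻ x, f (R⁻¹ • x) ∂μ = ENNReal.ofReal (R ^ finrank ℝ E) * ∫⁻ x, f x ∂μ := by
  have h := lintegral_map_equiv f
    (Homeomorph.smulOfNeZero R⁻¹ (inv_ne_zero hR.ne')).toMeasurableEquiv (μ := μ)
  simp only [Homeomorph.toMeasurableEquiv_coe, Homeomorph.smulOfNeZero_apply] at h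
  rw [← h, Measure.map_addHaar_smul μ (inv_ne_zero hR.ne'), lintegral_smul_measure, inv_pow,
    inv_inv, abs_of_pos (by positivity), smul_eq_mul]

theorem setLIntegral_closedBall_enorm_sub_rpow (x : E) {R : ℝ} (hR : 0 < R) (p : ℝ) :
    ∫⁻ y in closedBall x R, ‖y - x‖ₑ ^ p ∂μ =
      ENNReal.ofReal R ^ (p + finrank ℝ E) * ∫⁻ y in closedBall 0 1, ‖y‖ₑ ^ p ∂μ := by
  have hscale : (closedBall x R).indicator (fun y => ‖y - x‖ₑ ^ p) =
      fun y => ENNReal.ofReal R ^ p *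
        (closedBall 0 1).indicator (fun z => ‖z‖ₑ ^ p) (R⁻¹ • (y - x)) := by
    ext y
    have hmem : R⁻¹ • (y - x) ∈ closedBall (0 : E) 1 ↔ y ∈ closedBall x R := by
      rw [mem_closedBall_zero_iff, mem_closedBall, dist_eq_norm, norm_smul, Real.norm_eq_abs,
        abs_of_pos (inv_pos.2 hR), inv_mul_le_one₀ hR]
    by_cases hy : y ∈ closedBall x R
    · rw [indicator_of_mem hy, indicator_of_mem (hmem.2 hy), enorm_smul,
        ENNReal.mul_rpow_of_ne_top (by simp) (by simp), ← mul_assoc, ← ENNReal.mul_rpow_of_ne_top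
        (by simp) (by simp)]
      have hunit : ENNReal.ofReal R * ‖R⁻¹‖ₑ = 1 := by
        rw [← ofReal_norm, Real.norm_of_nonneg (by positivity), ← ENNReal.ofReal_mul hR.le,
          mul_inv_cancel₀ hR.ne', ENNReal.ofReal_one]
      rw [hunit, ENNReal.one_rpow, one_mul]
    · rw [indicator_of_notMem hy, indicator_of_notMem (mt hmem.1 hy), mul_zero]
  rw [← lintegral_indicator measurableSet_closedBall, hscale,
    lintegral_const_mul' _ _ (by simp [hR]),
    lintegral_sub_right_eq_self (fun y => (closedBall 0 1).indicator (‖·‖ₑ ^ p) (R⁻¹ • y)) x,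
    μ.lintegral_comp_inv_smul_of_pos _ hR, lintegral_indicator measurableSet_closedBall,
    ← mul_assoc, ENNReal.rpow_add _ _ (by simpa using hR) ENNReal.ofReal_ne_top,
    ENNReal.ofReal_pow hR.le, ENNReal.rpow_natCast]

theorem setLIntegral_closedBall_enorm_rpow_lt_top [Nontrivial E] {s : ℝ} (hs : 0 < s) :
    ∫⁻ y in closedBall (0 : E) 1, ‖y‖ₑ ^ (s - finrank ℝ E) ∂μ < ∞ := by
  have hint : IntegrableOn (fun y : E => ‖y‖ ^ (s - finrank ℝ E)) (ball 0 2) μ := by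
    refine integrableOn_ball_of_norm_le_rpow (C := 1) (α := finrank ℝ E - s) Module.finrank_pos
      (by linarith) (ae_of_all _ fun y => ?_)
      (continuous_norm.measurable.pow_const _).aestronglyMeasurable
    rw [Real.norm_of_nonneg (by positivity), one_mul, neg_sub]
  calc ∫⁻ y in closedBall (0 : E) 1, ‖y‖ₑ ^ (s - finrank ℝ E) ∂μ
      ≤ ∫⁻ y in ball (0 : E) 2, ‖y‖ₑ ^ (s - finrank ℝ E) ∂μ :=
        lintegral_mono_set (closedBall_subset_ball one_lt_two)
    _ = ∫⁻ y in ball (0 : E) 2, ENNReal.ofReal (‖y‖ ^ (s - finrank ℝ E)) ∂μ := by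
        refine lintegral_congr_ae (ae_restrict_of_ae ?_)
        filter_upwards [Measure.ae_ne μ 0] with y hy
        rw [← ofReal_norm, ENNReal.ofReal_rpow_of_pos (norm_pos_iff.2 hy)]
    _ < ∞ := hint.lintegral_lt_top

theorem setLIntegral_closedBall_infDist_rpow_le_of_finrank_le {F : Set E} {x : E} (hx : x ∈ F)
    {r s : ℝ} (hr : 0 < r) (hs : finrank ℝ E ≤ s) :
    ∫⁻ y in closedBall x r, ENNReal.ofReal (infDist y F) ^ (s - finrank ℝ E) ∂μ ≤
      μ (closedBall 0 1) * ENNReal.ofReal r ^ s := by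
  have hpointwise : ∀ y ∈ closedBall x r,
      ENNReal.ofReal (infDist y F) ^ (s - finrank ℝ E) ≤ ENNReal.ofReal r ^ (s - finrank ℝ E) :=
    fun y hy => ENNReal.rpow_le_rpow
      (ENNReal.ofReal_le_ofReal ((infDist_le_dist_of_mem hx).trans (mem_closedBall.1 hy)))
      (sub_nonneg.2 hs)
  calc ∫⁻ y in closedBall x r, ENNReal.ofReal (infDist y F) ^ (s - finrank ℝ E) ∂μ
      ≤ ∫⁻ _ in closedBall x r, ENNReal.ofReal r ^ (s - finrank ℝ E) ∂μ :=
        setLIntegral_mono' measurableSet_closedBall hpointwise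
    _ = μ (closedBall 0 1) * ENNReal.ofReal r ^ s := by
        rw [setLIntegral_const, μ.addHaar_closedBall' x hr.le, ENNReal.ofReal_pow hr.le,
          ← ENNReal.rpow_natCast, ← mul_assoc, ← ENNReal.rpow_add _ _ (by simpa using hr)
          ENNReal.ofReal_ne_top, sub_add_cancel, mul_comm]

theorem exists_setLIntegral_closedBall_infDist_rpow_le_of_lt_finrank {F : Set E}
    (hF : Bornology.IsBounded F) {ρ s : ℝ} (hρ : 0 < ρ) (hs : 0 < s) (hsd : s < finrank ℝ E)
    (hloc : ∀ x ∈ F,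
      ∫⁻ y in closedBall x ρ, ENNReal.ofReal (infDist y F) ^ (s - finrank ℝ E) ∂μ < ∞) :
    ∃ C ≠ ∞, ∀ x ∈ F, ∀ r : ℝ, ρ ≤ r →
      ∫⁻ y in closedBall x r, ENNReal.ofReal (infDist y F) ^ (s - finrank ℝ E) ∂μ ≤
        C * ENNReal.ofReal r ^ s := by
  have : Nontrivial E :=
    Module.nontrivial_of_finrank_pos (R := ℝ) (by exact_mod_cast hs.trans hsd)
  set f : E → ℝ≥0∞ := fun y => ENNReal.ofReal (infDist y F) ^ (s - finrank ℝ E)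
  set t := ρ / 2
  set A := ∫⁻ y in thickening t F, f y ∂μ
  have hA : A ≠ ∞ := by
    refine (setLIntegral_thickening_lt_top (hF.isCompact_closure.totallyBounded.subset
      subset_closure) (half_pos hρ) ?_).ne
    rwa [show 2 * t = ρ by ring]
  set B := ENNReal.ofReal (1 + diam F / t) ^ (-(s - finrank ℝ E)) *
    ∫⁻ y in closedBall (0 : E) 1, ‖y‖ₑ ^ (s - finrank ℝ E) ∂μ
  have hB : B ≠ ∞ := ENNReal.mul_ne_top (by simp [not_lt.2 hsd.le])
    (setLIntegral_closedBall_enorm_rpow_lt_top μ hs).ne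
  refine ⟨A / ENNReal.ofReal ρ ^ s + B, by finiteness, fun x hx r hr => ?_⟩
  have hr0 : 0 < r := hρ.trans_le hr
  calc ∫⁻ y in closedBall x r, f y ∂μ
      ≤ ∫⁻ y in thickening t F ∪ (closedBall x r \ thickening t F), f y ∂μ :=
        lintegral_mono_set (subset_union_right.trans union_sdiff_self.symm.subset)
    _ ≤ A + ∫⁻ y in closedBall x r \ thickening t F, f y ∂μ := lintegral_union_le _ _ _
    _ ≤ A + B * ENNReal.ofReal r ^ s := by
        grw [setLIntegral_closedBall_diff_thickening_infDist_rpow_le μ hF hx (half_pos hρ)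
          (by linarith) r, setLIntegral_closedBall_enorm_sub_rpow μ x hr0, sub_add_cancel]
        simp only [B]
        exact le_of_eq (by ac_rfl)
    _ ≤ (A / ENNReal.ofReal ρ ^ s + B) * ENNReal.ofReal r ^ s :=
        ENNReal.add_le_div_rpow_add_mul_rpow A B hρ hr hs.le

theorem exists_setLIntegral_closedBall_infDist_rpow_le {F : Set E} (hF : Bornology.IsBounded F)
    {r₀ s : ℝ} (hr₀ : 0 < r₀) (hs : 0 < s) {C₀ : ℝ≥0∞} (hC₀ : C₀ ≠ ∞)
    (hsmall : ∀ x ∈ F, ∀ r : ℝ, 0 < r → r < r₀ →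
      ∫⁻ y in closedBall x r, ENNReal.ofReal (infDist y F) ^ (s - finrank ℝ E) ∂μ ≤
        C₀ * ENNReal.ofReal r ^ s) :
    ∃ C ≠ ∞, ∀ x ∈ F, ∀ r : ℝ, 0 < r →
      ∫⁻ y in closedBall x r, ENNReal.ofReal (infDist y F) ^ (s - finrank ℝ E) ∂μ ≤
        C * ENNReal.ofReal r ^ s := by
  rcases le_or_gt (finrank ℝ E : ℝ) s with hds | hsd
  · exact ⟨μ (closedBall 0 1), measure_closedBall_lt_top.ne, fun x hx r hr =>
      setLIntegral_closedBall_infDist_rpow_le_of_finrank_le μ hx hr hds⟩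
  obtain ⟨C, hC, hlarge⟩ :=
    exists_setLIntegral_closedBall_infDist_rpow_le_of_lt_finrank μ hF (half_pos hr₀) hs hsd
      fun x hx => (hsmall x hx _ (half_pos hr₀) (half_lt_self hr₀)).trans_lt (by finiteness)
  refine ⟨C₀ + C, by finiteness, fun x hx r hr => ?_⟩
  rcases lt_or_ge r r₀ with hrr₀ | hrr₀
  · exact (hsmall x hx r hr hrr₀).trans (mul_le_mul_left le_self_add _)
  · exact (hlarge x hx r (by linarith)).trans (mul_le_mul_left le_add_self _)

end Haar

theorem statement18_general
    (n : ℕ)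
    (F : Set (EuclideanSpace ℝ (Fin n)))
    (hFbdd : Bornology.IsBounded F)
    (r₀ s : ℝ) (hr₀ : 0 < r₀) (hs : 0 < s)
    (c : ℝ)
    (h : ∀ x ∈ F, ∀ r : ℝ, 0 < r → r < r₀ →
      (∫⁻ y in Metric.closedBall x r,
        ENNReal.ofReal (Metric.infDist y F) ^ (s - (n : ℝ)))
        ≤ ENNReal.ofReal (c * r ^ s)) :
    ∃ c' : ℝ, 0 < c' ∧ ∀ x ∈ F, ∀ r : ℝ, 0 < r →
      (∫⁻ y in Metric.closedBall x r,
        ENNReal.ofReal (Metric.infDist y F) ^ (s - (n : ℝ)))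
        ≤ ENNReal.ofReal (c' * r ^ s) := by
  have hdim : finrank ℝ (EuclideanSpace ℝ (Fin n)) = n := finrank_euclideanSpace_fin
  have hsmall : ∀ x ∈ F, ∀ r : ℝ, 0 < r → r < r₀ →
      ∫⁻ y in closedBall x r,
          ENNReal.ofReal (infDist y F) ^ (s - finrank ℝ (EuclideanSpace ℝ (Fin n))) ≤
        ENNReal.ofReal c * ENNReal.ofReal r ^ s := fun x hx r hr hrr₀ => by
    rw [hdim, ENNReal.ofReal_rpow_of_pos hr, ← ENNReal.ofReal_mul' (by positivity)]
    exact h x hx r hr hrr₀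
  obtain ⟨C, hC, hbound⟩ := exists_setLIntegral_closedBall_infDist_rpow_le volume hFbdd hr₀ hs
    ENNReal.ofReal_ne_top hsmall
  obtain ⟨c', hc', hc'C⟩ := ENNReal.exists_pos_mul_rpow_le_ofReal hC s
  refine ⟨c', hc', fun x hx r hr => ?_⟩
  simpa only [hdim] using (hbound x hx r hr).trans (hc'C r hr)

/-- Let F ⊆ ℝⁿ be non-empty and bounded, r₀ > 0, s > 0. If there
is c > 0 with ∫_{B(x,r)} dist(y,F)^{s−n} dy ≤ c·rˢ for all x ∈ F and 0 < r < r₀,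
then there is c' > 0 with ∫_{B(x,r)} dist(y,F)^{s−n} dy ≤ c'·rˢ for all x ∈ F
and all r > 0. (Powers of the distance are taken in ℝ≥0∞, so that 0^{s−n} = ∞
for s < n and 0^0 = 1, matching the stated convention.) -/
theorem statement18
    (n : ℕ) (hn : 1 ≤ n)
    (F : Set (EuclideanSpace ℝ (Fin n)))
    (hFne : F.Nonempty) (hFbdd : Bornology.IsBounded F)
    (r₀ s : ℝ) (hr₀ : 0 < r₀) (hs : 0 < s)
    (c : ℝ) (hc : 0 < c)
    (h : ∀ x ∈ F, ∀ r : ℝ, 0 < r → r < r₀ →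
      (∫⁻ y in Metric.closedBall x r,
        ENNReal.ofReal (Metric.infDist y F) ^ (s - (n : ℝ)))
        ≤ ENNReal.ofReal (c * r ^ s)) :
    ∃ c' : ℝ, 0 < c' ∧ ∀ x ∈ F, ∀ r : ℝ, 0 < r →
      (∫⁻ y in Metric.closedBall x r,
        ENNReal.ofReal (Metric.infDist y F) ^ (s - (n : ℝ)))
        ≤ ENNReal.ofReal (c' * r ^ s) :=
  statement18_general n F hFbdd r₀ s hr₀ hs c h
end
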